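/- arXiv:math/0211036 — 7 statements merged into one kernel-verified Lean document; each statement's English description precedes it below -/
import Mathlib

section
/- Let R(x) = a_0 + a_1 x + ... + a_n x^n be a unimodal polynomial with nonnegative real coefficients, and let R_1(x) = b_0 + b_1 x be any polynomial of degree at most one with nonnegative real coefficients. Then the product R(x)·R_1(x) is unimodal. Moreover, if a_0 ≤ a_1 ≤ ... ≤ a_k ≥ a_{k+1} ≥ ... ≥ a_n, then the mode m of the product can be taken so that the coefficient of x^m in R·R_1 equals max{a_k b_0 + a_{k-1} b_1, a_{k+1} b_0 + a_k b_1}. -/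
open Polynomial
open scoped Classical

/-- The independence polynomial of a finite simple graph: the coefficient of `x^k`
is the number of independent (stable) sets of cardinality `k`. -/
noncomputable def indepPoly {V : Type*} [Fintype V] (G : SimpleGraph V) : Polynomial ℤ :=
  ∑ s ∈ Finset.univ.powerset.filter
      (fun s : Finset V => ∀ u ∈ s, ∀ v ∈ s, ¬ G.Adj u v),
    Polynomial.X ^ s.card

/-- A polynomial is unimodal if its coefficient sequence increases up to some
index `k` and decreases afterwards. -/
def Unimodal (p : Polynomial ℤ) : Prop :=
  ∃ k : ℕ, (∀ i j : ℕ, i ≤ j → j ≤ k → p.coeff i ≤ p.coeff j) ∧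
    (∀ i j : ℕ, k ≤ i → i ≤ j → p.coeff j ≤ p.coeff i)

/-- A finset of vertices is independent (stable) if no two of its members are adjacent. -/
def IndepFinset {V : Type*} (G : SimpleGraph V) (s : Finset V) : Prop :=
  ∀ u ∈ s, ∀ v ∈ s, ¬ G.Adj u v

/-- A maximal independent set. -/
def MaximalIndepFinset {V : Type*} (G : SimpleGraph V) (s : Finset V) : Prop :=
  IndepFinset G s ∧ ∀ u, u ∉ s → ¬ IndepFinset G (insert u s)

/-- A graph is well-covered if all its maximal independent sets have the same cardinality. -/
def WellCovered {V : Type*} [Fintype V] (G : SimpleGraph V) : Prop :=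
  ∀ s t : Finset V, MaximalIndepFinset G s → MaximalIndepFinset G t → s.card = t.card

/-- The stability number `α(G)`: maximum size of an independent set. -/
noncomputable def alpha {V : Type*} [Fintype V] (G : SimpleGraph V) : ℕ :=
  (Finset.univ.powerset.filter (fun s : Finset V => IndepFinset G s)).sup Finset.card

/-- A vertex is simplicial if its neighborhood induces a complete subgraph. -/
def Simplicial {V : Type*} (G : SimpleGraph V) (v : V) : Prop :=
  ∀ u w, G.Adj v u → G.Adj v w → u ≠ w → G.Adj u w

/-- A graph is claw-free if it has no induced subgraph isomorphic to `K_{1,3}`. -/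
def ClawFree {V : Type*} (G : SimpleGraph V) : Prop :=
  ∀ c x y z : V, G.Adj c x → G.Adj c y → G.Adj c z →
    x ≠ y → x ≠ z → y ≠ z → ¬ G.Adj x y → ¬ G.Adj x z → ¬ G.Adj y z → False

/-- Disjoint union of two simple graphs. -/
def disjUnion {V W : Type*} (G : SimpleGraph V) (H : SimpleGraph W) : SimpleGraph (V ⊕ W) :=
  SimpleGraph.fromRel (fun x y =>
    (∃ a b, x = Sum.inl a ∧ y = Sum.inl b ∧ G.Adj a b) ∨
    (∃ a b, x = Sum.inr a ∧ y = Sum.inr b ∧ H.Adj a b))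

/-- The edge-join `(G;v) ⊖ (H;w)`: disjoint union of `G` and `H` plus the edge `vw`. -/
def edgeJoin {V W : Type*} (G : SimpleGraph V) (v : V) (H : SimpleGraph W) (w : W) :
    SimpleGraph (V ⊕ W) :=
  SimpleGraph.fromRel (fun x y =>
    (∃ a b, x = Sum.inl a ∧ y = Sum.inl b ∧ G.Adj a b) ∨
    (∃ a b, x = Sum.inr a ∧ y = Sum.inr b ∧ H.Adj a b) ∨
    (x = Sum.inl v ∧ y = Sum.inr w))

/-- The triangle chain `△_n = K_3 ⊖ (n-1)K_3` on vertices `v_1, ..., v_{3n}`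
(0-indexed here: vertex `k` is `v_{k+1}`): triangles `{3i, 3i+1, 3i+2}` together with
bridge edges joining vertex `3i+1` to vertex `3i+3`. -/
def triChain (n : ℕ) : SimpleGraph (Fin (3 * n)) :=
  SimpleGraph.fromRel (fun x y =>
    ((x : ℕ) / 3 = (y : ℕ) / 3) ∨ (∃ i, (x : ℕ) = 3 * i + 1 ∧ (y : ℕ) = 3 * i + 3))

/-- The centipede `W_n`: vertices `a_i = Sum.inl i` and `b_i = Sum.inr i`, with
edges `a_i b_i` and `b_i b_{i+1}`. -/
def centipede (n : ℕ) : SimpleGraph (Fin n ⊕ Fin n) :=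
  SimpleGraph.fromRel (fun x y =>
    (∃ i, x = Sum.inl i ∧ y = Sum.inr i) ∨
    (∃ i j : Fin n, x = Sum.inr i ∧ y = Sum.inr j ∧ (i : ℕ) + 1 = (j : ℕ)))

/-- The well-covered spider `S_n`: vertices `a_i = Sum.inl i`, `b_i = Sum.inr i`
(`0 ≤ i ≤ n`), with edges `a_i b_i` for all `i` and `b_0 b_i` for `i ≠ 0`. -/
def spider (n : ℕ) : SimpleGraph (Fin (n + 1) ⊕ Fin (n + 1)) :=
  SimpleGraph.fromRel (fun x y =>
    (∃ i, x = Sum.inl i ∧ y = Sum.inr i) ∨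
    (∃ i, x = Sum.inr 0 ∧ y = Sum.inr i ∧ i ≠ 0))

/-- The path `P_4` on vertices `a = 0`, `b = 1`, `c = 2`, `d = 3`. -/
def P4 : SimpleGraph (Fin 4) :=
  SimpleGraph.fromRel (fun x y =>
    (x = 0 ∧ y = 1) ∨ (x = 1 ∧ y = 2) ∨ (x = 2 ∧ y = 3))

/-- `G_{2,4} = (W_2; b_2) ⊖ (W_4; v_2)`. -/
def G24 : SimpleGraph ((Fin 2 ⊕ Fin 2) ⊕ (Fin 4 ⊕ Fin 4)) :=
  edgeJoin (centipede 2) (Sum.inr 1) (centipede 4) (Sum.inr 1)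

/-- If `R(x) = a_0 + ... + a_n x^n` is a unimodal polynomial with nonnegative
real coefficients (increasing up to index `k` and decreasing afterwards) and
`R_1(x) = b_0 + b_1 x` has nonnegative coefficients, then `R·R_1` is unimodal, with a mode `m`
whose coefficient equals `max{a_k b_0 + a_{k-1} b_1, a_{k+1} b_0 + a_k b_1}`
(the coefficients of `x^k` and `x^{k+1}` in `R·R_1`). -/
theorem stmt0 (n k : ℕ) (a : ℕ → ℝ) (b0 b1 : ℝ)
    (ha : ∀ i, 0 ≤ a i) (hb0 : 0 ≤ b0) (hb1 : 0 ≤ b1)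
    (han : ∀ i, n < i → a i = 0) (hkn : k ≤ n)
    (hmono : ∀ i j : ℕ, i ≤ j → j ≤ k → a i ≤ a j)
    (hanti : ∀ i j : ℕ, k ≤ i → i ≤ j → a j ≤ a i) :
    let R : Polynomial ℝ := ∑ t ∈ Finset.range (n + 1), Polynomial.C (a t) * Polynomial.X ^ t
    let R1 : Polynomial ℝ := Polynomial.C b0 + Polynomial.C b1 * Polynomial.X
    ∃ m : ℕ,
      (∀ i j : ℕ, i ≤ j → j ≤ m → (R * R1).coeff i ≤ (R * R1).coeff j) ∧
      (∀ i j : ℕ, m ≤ i → i ≤ j → (R * R1).coeff j ≤ (R * R1).coeff i) ∧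
      (R * R1).coeff m = max ((R * R1).coeff k) ((R * R1).coeff (k + 1)) := by
  intro R R1
  have hR : ∀ i, R.coeff i = a i := by
    intro i
    simp only [R, Polynomial.finset_sum_coeff, Polynomial.coeff_C_mul,
      Polynomial.coeff_X_pow, mul_ite, mul_one, mul_zero]
    rw [Finset.sum_ite_eq (Finset.range (n + 1)) i a]
    by_cases hi : i ∈ Finset.range (n + 1)
    · simp [hi]
    · simp only [hi, if_false]
      exact (han i (by simpa using Nat.lt_of_succ_le (not_lt.mp (by simpa using hi)))).symm
  have hc0 : (R * R1).coeff 0 = a 0 * b0 := by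
    rw [Polynomial.mul_coeff_zero, hR]
    simp [R1]
  have hc : ∀ i : ℕ, (R * R1).coeff (i + 1) = a (i + 1) * b0 + a i * b1 := by
    intro i
    have : R * R1 = R * Polynomial.C b0 + R * Polynomial.X * Polynomial.C b1 := by
      simp only [R1]
      ring
    rw [this, Polynomial.coeff_add, Polynomial.coeff_mul_C, Polynomial.coeff_mul_C,
      Polynomial.coeff_mul_X, hR, hR]
  have hup : ∀ i j : ℕ, i ≤ j → j ≤ k → (R * R1).coeff i ≤ (R * R1).coeff j := by
    intro i j hij hjk
    match j, i with
    | 0, i =>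
      interval_cases i; exact le_refl _
    | (j' + 1), 0 =>
      rw [hc0, hc]
      have h1 : a 0 * b0 ≤ a (j' + 1) * b0 :=
        mul_le_mul_of_nonneg_right (hmono 0 (j' + 1) (by omega) hjk) hb0
      nlinarith [mul_nonneg (ha j') hb1]
    | (j' + 1), (i' + 1) =>
      rw [hc, hc]
      have h1 : a (i' + 1) * b0 ≤ a (j' + 1) * b0 :=
        mul_le_mul_of_nonneg_right (hmono _ _ hij hjk) hb0
      have h2 : a i' * b1 ≤ a j' * b1 :=
        mul_le_mul_of_nonneg_right (hmono i' j' (by omega) (by omega)) hb1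
      linarith
  have hdown : ∀ i j : ℕ, k + 1 ≤ i → i ≤ j → (R * R1).coeff j ≤ (R * R1).coeff i := by
    intro i j hki hij
    obtain ⟨i', rfl⟩ : ∃ i', i = i' + 1 := ⟨i - 1, by omega⟩
    obtain ⟨j', rfl⟩ : ∃ j', j = j' + 1 := ⟨j - 1, by omega⟩
    rw [hc, hc]
    have h1 : a (j' + 1) * b0 ≤ a (i' + 1) * b0 :=
      mul_le_mul_of_nonneg_right (hanti _ _ (by omega) hij) hb0
    have h2 : a j' * b1 ≤ a i' * b1 :=
      mul_le_mul_of_nonneg_right (hanti i' j' (by omega) (by omega)) hb1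
    linarith
  by_cases h : (R * R1).coeff (k + 1) ≤ (R * R1).coeff k
  · refine ⟨k, hup, ?_, (max_eq_left h).symm⟩
    intro i j hki hij
    rcases Nat.eq_or_lt_of_le hki with rfl | hki'
    · rcases Nat.eq_or_lt_of_le hij with rfl | hij'
      · exact le_refl _
      · exact le_trans (hdown (k + 1) j (le_refl _) hij') h
    · exact hdown i j hki' hij
  · push_neg at h
    refine ⟨k + 1, ?_, fun i j hki hij => hdown i j hki hij, (max_eq_right h.le).symm⟩
    intro i j hij hjk
    rcases Nat.lt_or_ge j (k + 1) with hj | hj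
    · exact hup i j hij (by omega)
    · have hjk1 : j = k + 1 := by omega
      subst hjk1
      rcases Nat.lt_or_ge i (k + 1) with hi | hi
      · exact le_trans (hup i k (by omega) (le_refl _)) h.le
      · have : i = k + 1 := by omega
        subst this; exact le_refl _
end

section
/- Let G = (V,E) be a finite simple graph and U ⊆ V be a set of vertices such that the induced subgraph G[U] is complete. Then I(G;x) = I(G−U;x) + x·Σ_{v∈U} I(G−N[v];x), where G−U is the subgraph induced on V \ U and G−N[v] is the subgraph induced on V \ N[v]. -/
open Polynomial
open scoped Classical

lemma indepPoly_induce_eq {V : Type*} [Fintype V] (G : SimpleGraph V) (s : Set V) [Fintype ↥s] :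
    indepPoly (G.induce s) =
      ∑ t ∈ Finset.univ.filter
        (fun t : Finset V => (∀ x ∈ t, x ∈ s) ∧ ∀ u ∈ t, ∀ w ∈ t, ¬ G.Adj u w),
      (Polynomial.X : Polynomial ℤ) ^ t.card := by
  classical
  unfold indepPoly
  rw [Finset.powerset_univ]
  refine Finset.sum_nbij' (i := fun t => t.map (Function.Embedding.subtype _))
    (j := fun t => t.subtype (· ∈ s)) ?_ ?_ ?_ ?_ ?_
  · intro a ha
    simp only [Finset.mem_filter, Finset.mem_univ, true_and] at ha ⊢
    constructor
    · intro x hx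
      simp only [Finset.mem_map, Function.Embedding.coe_subtype] at hx
      obtain ⟨y, hy, rfl⟩ := hx
      exact y.2
    · intro u hu w hw
      simp only [Finset.mem_map, Function.Embedding.coe_subtype] at hu hw
      obtain ⟨u', hu', rfl⟩ := hu
      obtain ⟨w', hw', rfl⟩ := hw
      exact ha u' hu' w' hw'
  · intro a ha
    simp only [Finset.mem_filter, Finset.mem_univ, true_and] at ha ⊢
    intro u hu w hw
    simp only [Finset.mem_subtype] at hu hw
    exact ha.2 u hu w hw
  · intro a ha
    ext x
    simp [Finset.mem_subtype]
  · intro a ha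
    simp only [Finset.mem_filter, Finset.mem_univ, true_and] at ha
    ext x
    simp only [Finset.mem_map, Finset.mem_subtype, Function.Embedding.coe_subtype]
    constructor
    · rintro ⟨y, hy, rfl⟩; exact hy
    · intro hx; exact ⟨⟨x, ha.1 x hx⟩, hx, rfl⟩
  · intro a ha
    simp [Finset.card_map]

/-- if `U` induces a complete subgraph of `G`, then
`I(G;x) = I(G−U;x) + x·Σ_{v∈U} I(G−N[v];x)`. -/
theorem stmt2 {V : Type*} [Fintype V] (G : SimpleGraph V) (U : Finset V)
    (hU : ∀ u ∈ U, ∀ v ∈ U, u ≠ v → G.Adj u v) :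
    indepPoly G = indepPoly (G.induce ((↑U : Set V)ᶜ)) +
      Polynomial.X * ∑ v ∈ U, indepPoly (G.induce ((G.neighborSet v ∪ {v})ᶜ)) := by
  classical
  have key : ∀ S : Finset V, (∀ u ∈ S, ∀ w ∈ S, ¬ G.Adj u w) → (S ∩ U).Nonempty →
      (S ∩ U).card = 1 := by
    intro S hS ⟨v, hv⟩
    rw [Finset.card_eq_one]
    refine ⟨v, Finset.eq_singleton_iff_unique_mem.2 ⟨hv, ?_⟩⟩
    intro x hx
    by_contra hne
    exact hS x (Finset.mem_of_mem_inter_left hx) v (Finset.mem_of_mem_inter_left hv)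
      (hU x (Finset.mem_of_mem_inter_right hx) v (Finset.mem_of_mem_inter_right hv) hne)
  -- split the defining sum
  conv_lhs => rw [indepPoly, Finset.powerset_univ]
  rw [← Finset.sum_filter_add_sum_filter_not
    (Finset.univ.filter (fun S : Finset V => ∀ u ∈ S, ∀ w ∈ S, ¬ G.Adj u w))
    (fun S => S ∩ U = ∅)]
  congr 1
  · -- first part
    rw [indepPoly_induce_eq G ((↑U : Set V)ᶜ)]
    apply Finset.sum_congr _ (fun _ _ => rfl)
    rw [Finset.filter_filter]
    ext S
    simp only [Finset.mem_filter, Finset.mem_univ, true_and]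
    constructor
    · rintro ⟨hind, hdisj⟩
      refine ⟨fun x hx => ?_, hind⟩
      simp only [Set.mem_compl_iff, Finset.mem_coe]
      intro hxU
      exact Finset.notMem_empty x (hdisj ▸ Finset.mem_inter.2 ⟨hx, hxU⟩)
    · rintro ⟨hsub, hind⟩
      refine ⟨hind, Finset.eq_empty_iff_forall_notMem.2 ?_⟩
      intro x hx
      rw [Finset.mem_inter] at hx
      exact (hsub x hx.1) hx.2
  · -- second part
    rw [Finset.mul_sum]
    have step1 : ∑ S ∈ (Finset.univ.filter (fun S : Finset V => ∀ u ∈ S, ∀ w ∈ S, ¬ G.Adj u w)).filter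
          (fun S => ¬ S ∩ U = ∅),
        (Polynomial.X : Polynomial ℤ) ^ S.card
        = ∑ S ∈ (Finset.univ.filter (fun S : Finset V => ∀ u ∈ S, ∀ w ∈ S, ¬ G.Adj u w)).filter
            (fun S => ¬ S ∩ U = ∅),
          ∑ v ∈ S ∩ U, (Polynomial.X : Polynomial ℤ) ^ S.card := by
      refine Finset.sum_congr rfl ?_
      intro S hS
      simp only [Finset.mem_filter, Finset.mem_univ, true_and] at hS
      rw [Finset.sum_const, key S hS.1 (Finset.nonempty_iff_ne_empty.2 hS.2), one_smul]
    rw [step1]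
    rw [Finset.sum_comm' (s' := fun v => (Finset.univ.filter
        (fun S : Finset V => ∀ u ∈ S, ∀ w ∈ S, ¬ G.Adj u w)).filter (fun S => v ∈ S))
        (t' := U) ?_]
    · refine Finset.sum_congr rfl ?_
      intro v hv
      rw [indepPoly_induce_eq G ((G.neighborSet v ∪ {v})ᶜ), Finset.mul_sum]
      refine Finset.sum_nbij' (i := fun S => S.erase v) (j := fun T => insert v T)
        ?_ ?_ ?_ ?_ ?_
      · intro S hS
        simp only [Finset.mem_filter, Finset.mem_univ, true_and] at hS ⊢
        obtain ⟨hind, hvS⟩ := hS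
        constructor
        · intro x hx
          have hxS := Finset.mem_of_mem_erase hx
          have hxv := Finset.ne_of_mem_erase hx
          simp only [Set.mem_compl_iff, Set.mem_union, SimpleGraph.mem_neighborSet,
            Set.mem_singleton_iff]
          push_neg
          exact ⟨hind v hvS x hxS, hxv⟩
        · intro u hu w hw
          exact hind u (Finset.mem_of_mem_erase hu) w (Finset.mem_of_mem_erase hw)
      · intro T hT
        simp only [Finset.mem_filter, Finset.mem_univ, true_and] at hT ⊢
        obtain ⟨hsub, hind⟩ := hT
        have hvT : ∀ x ∈ T, ¬ G.Adj v x ∧ x ≠ v := by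
          intro x hx
          have := hsub x hx
          simp only [Set.mem_compl_iff, Set.mem_union, SimpleGraph.mem_neighborSet,
            Set.mem_singleton_iff] at this
          push_neg at this
          exact this
        refine ⟨?_, Finset.mem_insert_self v T⟩
        intro u hu w hw
        rcases Finset.mem_insert.1 hu with rfl | hu' <;>
          rcases Finset.mem_insert.1 hw with rfl | hw'
        · exact G.irrefl
        · exact (hvT w hw').1
        · intro h; exact (hvT u hu').1 h.symm
        · exact hind u hu' w hw'
      · intro S hS
        simp only [Finset.mem_filter, Finset.mem_univ, true_and] at hS
        exact Finset.insert_erase hS.2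
      · intro T hT
        simp only [Finset.mem_filter, Finset.mem_univ, true_and] at hT
        apply Finset.erase_insert
        intro hvT
        have := hT.1 v hvT
        simp at this
      · intro S hS
        simp only [Finset.mem_filter, Finset.mem_univ, true_and] at hS
        rw [← pow_succ', Finset.card_erase_add_one hS.2]
    · intro S v
      simp only [Finset.mem_filter, Finset.mem_univ, true_and, Finset.mem_inter]
      constructor
      · rintro ⟨⟨hind, hne⟩, hvS, hvU⟩
        exact ⟨⟨hind, hvS⟩, hvU⟩
      · rintro ⟨⟨hind, hvS⟩, hvU⟩
        refine ⟨⟨hind, ?_⟩, hvS, hvU⟩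
        intro h
        exact Finset.notMem_empty v (h ▸ Finset.mem_inter.2 ⟨hvS, hvU⟩)
end

section
/- Let G_1 = (V_1,E_1) and G_2 = (V_2,E_2) be finite well-covered simple graphs, and for i = 1,2 let v_i ∈ V_i be a simplicial vertex of G_i such that N_{G_i}[v_i] contains at least one further simplicial vertex of G_i besides v_i. Then the edge-join G = (G_1;v_1) ⊖ (G_2;v_2) is well-covered and α(G) = α(G_1) + α(G_2). -/
open Polynomial
open scoped Classical

section Aux

variable {V W : Type*} {G1 : SimpleGraph V} {G2 : SimpleGraph W} {v1 : V} {v2 : W}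

lemma ej_inl_inl {a b : V} :
    (edgeJoin G1 v1 G2 v2).Adj (Sum.inl a) (Sum.inl b) ↔ G1.Adj a b := by
  simp only [edgeJoin, SimpleGraph.fromRel_adj]
  constructor
  · rintro ⟨hne, h | h⟩ <;>
      rcases h with ⟨a', b', h1, h2, h3⟩ | ⟨a', b', h1, h2, h3⟩ | ⟨h1, h2⟩ <;>
      simp_all [SimpleGraph.adj_comm]
  · intro h
    exact ⟨by simpa using h.ne, Or.inl (Or.inl ⟨a, b, rfl, rfl, h⟩)⟩

lemma ej_inr_inr {a b : W} :
    (edgeJoin G1 v1 G2 v2).Adj (Sum.inr a) (Sum.inr b) ↔ G2.Adj a b := by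
  simp only [edgeJoin, SimpleGraph.fromRel_adj]
  constructor
  · rintro ⟨hne, h | h⟩ <;>
      rcases h with ⟨a', b', h1, h2, h3⟩ | ⟨a', b', h1, h2, h3⟩ | ⟨h1, h2⟩ <;>
      simp_all [SimpleGraph.adj_comm]
  · intro h
    exact ⟨by simpa using h.ne, Or.inl (Or.inr (Or.inl ⟨a, b, rfl, rfl, h⟩))⟩

lemma ej_inl_inr {a : V} {b : W} :
    (edgeJoin G1 v1 G2 v2).Adj (Sum.inl a) (Sum.inr b) ↔ a = v1 ∧ b = v2 := by
  simp only [edgeJoin, SimpleGraph.fromRel_adj]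
  constructor
  · rintro ⟨hne, h | h⟩ <;>
      rcases h with ⟨a', b', h1, h2, h3⟩ | ⟨a', b', h1, h2, h3⟩ | ⟨h1, h2⟩ <;>
      simp_all [SimpleGraph.adj_comm]
  · rintro ⟨rfl, rfl⟩
    exact ⟨by simp, Or.inl (Or.inr (Or.inr ⟨rfl, rfl⟩))⟩

lemma not_indep_iff {V : Type*} (G : SimpleGraph V) (s : Finset V) :
    ¬ IndepFinset G s ↔ ∃ u ∈ s, ∃ w ∈ s, G.Adj u w := by
  unfold IndepFinset
  push_neg
  rfl

lemma exists_adj_of_max {V : Type*} {G : SimpleGraph V} {s : Finset V} {x : V}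
    (hind : IndepFinset G s) (h : ¬ IndepFinset G (insert x s)) :
    ∃ w ∈ s, G.Adj x w := by
  rw [not_indep_iff] at h
  obtain ⟨u, hu, w, hw, hadj⟩ := h
  by_cases hws : w ∈ s
  · by_cases hus : u ∈ s
    · exact absurd hadj (hind u hus w hws)
    · have hux : u = x := (Finset.mem_insert.1 hu).resolve_right hus
      exact ⟨w, hws, by rwa [hux] at hadj⟩
  · have hwx : w = x := (Finset.mem_insert.1 hw).resolve_right hws
    by_cases hus : u ∈ s
    · exact ⟨u, hus, by rw [hwx] at hadj; exact hadj.symm⟩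
    · have hux : u = x := (Finset.mem_insert.1 hu).resolve_right hus
      rw [hux, hwx] at hadj
      exact absurd hadj (G.irrefl)

lemma exists_maximal_alpha {V : Type*} [Fintype V] (G : SimpleGraph V) :
    ∃ s : Finset V, MaximalIndepFinset G s ∧ s.card = alpha G := by
  classical
  set F := Finset.univ.powerset.filter (fun s : Finset V => IndepFinset G s) with hF
  have halpha : alpha G = F.sup Finset.card := rfl
  have hne : F.Nonempty := ⟨∅, by
    refine Finset.mem_filter.2 ⟨Finset.mem_powerset.2 (Finset.empty_subset _), ?_⟩
    intro u hu
    exact absurd hu (Finset.notMem_empty u)⟩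
  obtain ⟨s, hs, hcard⟩ := Finset.exists_mem_eq_sup F hne Finset.card
  have hsind : IndepFinset G s := (Finset.mem_filter.1 hs).2
  refine ⟨s, ⟨hsind, fun u hu hcon => ?_⟩, by rw [halpha, hcard]⟩
  have hmem : (insert u s) ∈ F :=
    Finset.mem_filter.2 ⟨Finset.mem_powerset.2 (Finset.subset_univ _), hcon⟩
  have hle : (insert u s).card ≤ F.sup Finset.card := Finset.le_sup hmem
  rw [Finset.card_insert_of_notMem hu, ← hcard] at hle
  omega

lemma card_eq_alpha {V : Type*} [Fintype V] {G : SimpleGraph V} (h : WellCovered G)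
    {s : Finset V} (hs : MaximalIndepFinset G s) : s.card = alpha G := by
  obtain ⟨t, ht, hc⟩ := exists_maximal_alpha G
  rw [← hc]
  exact h s t hs ht

lemma toLeft_maximal
    (hex1 : ∃ u, u ≠ v1 ∧ u ∈ G1.neighborSet v1 ∪ {v1} ∧ Simplicial G1 u)
    {s : Finset (V ⊕ W)} (hm : MaximalIndepFinset (edgeJoin G1 v1 G2 v2) s) :
    MaximalIndepFinset G1 s.toLeft := by
  obtain ⟨hind, hmax⟩ := hm
  have hind1 : IndepFinset G1 s.toLeft := fun a ha b hb hab =>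
    hind _ (Finset.mem_toLeft.1 ha) _ (Finset.mem_toLeft.1 hb) (ej_inl_inl.2 hab)
  refine ⟨hind1, fun u hu hcon => ?_⟩
  have hus : Sum.inl u ∉ s := fun h => hu (Finset.mem_toLeft.2 h)
  obtain ⟨w, hw, hadj⟩ := exists_adj_of_max hind (hmax _ hus)
  cases w with
  | inl b =>
      exact hcon u (Finset.mem_insert_self _ _) b
        (Finset.mem_insert_of_mem (Finset.mem_toLeft.2 hw)) (ej_inl_inl.1 hadj)
  | inr b =>
      obtain ⟨huv, -⟩ := ej_inl_inr.1 hadj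
      rw [huv] at hcon hus
      obtain ⟨u1, hne, hmem, hsimp⟩ := hex1
      have hadj1 : G1.Adj v1 u1 := by
        rcases hmem with h | h
        · exact h
        · simp only [Set.mem_singleton_iff] at h
          exact absurd h hne
      have hu1 : u1 ∉ s.toLeft := fun h =>
        hcon v1 (Finset.mem_insert_self _ _) u1 (Finset.mem_insert_of_mem h) hadj1
      have hu1s : Sum.inl u1 ∉ s := fun h => hu1 (Finset.mem_toLeft.2 h)
      obtain ⟨w, hw', hadj'⟩ := exists_adj_of_max hind (hmax _ hu1s)
      cases w with
      | inl c =>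
          have hc : c ∈ s.toLeft := Finset.mem_toLeft.2 hw'
          have hcv : c ≠ v1 := fun h => hus (h ▸ hw')
          have hcv1 : G1.Adj c v1 := hsimp c v1 (ej_inl_inl.1 hadj') hadj1.symm hcv
          exact hcon v1 (Finset.mem_insert_self _ _) c (Finset.mem_insert_of_mem hc) hcv1.symm
      | inr c =>
          exact hne (ej_inl_inr.1 hadj').1

lemma toRight_maximal
    (hex2 : ∃ u, u ≠ v2 ∧ u ∈ G2.neighborSet v2 ∪ {v2} ∧ Simplicial G2 u)
    {s : Finset (V ⊕ W)} (hm : MaximalIndepFinset (edgeJoin G1 v1 G2 v2) s) :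
    MaximalIndepFinset G2 s.toRight := by
  obtain ⟨hind, hmax⟩ := hm
  have hind2 : IndepFinset G2 s.toRight := fun a ha b hb hab =>
    hind _ (Finset.mem_toRight.1 ha) _ (Finset.mem_toRight.1 hb) (ej_inr_inr.2 hab)
  refine ⟨hind2, fun u hu hcon => ?_⟩
  have hus : Sum.inr u ∉ s := fun h => hu (Finset.mem_toRight.2 h)
  obtain ⟨w, hw, hadj⟩ := exists_adj_of_max hind (hmax _ hus)
  cases w with
  | inr b =>
      exact hcon u (Finset.mem_insert_self _ _) b
        (Finset.mem_insert_of_mem (Finset.mem_toRight.2 hw)) (ej_inr_inr.1 hadj)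
  | inl b =>
      obtain ⟨-, huv⟩ := ej_inl_inr.1 hadj.symm
      rw [huv] at hcon hus
      obtain ⟨u2, hne, hmem, hsimp⟩ := hex2
      have hadj2 : G2.Adj v2 u2 := by
        rcases hmem with h | h
        · exact h
        · simp only [Set.mem_singleton_iff] at h
          exact absurd h hne
      have hu2 : u2 ∉ s.toRight := fun h =>
        hcon v2 (Finset.mem_insert_self _ _) u2 (Finset.mem_insert_of_mem h) hadj2
      have hu2s : Sum.inr u2 ∉ s := fun h => hu2 (Finset.mem_toRight.2 h)
      obtain ⟨w, hw', hadj'⟩ := exists_adj_of_max hind (hmax _ hu2s)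
      cases w with
      | inr c =>
          have hc : c ∈ s.toRight := Finset.mem_toRight.2 hw'
          have hcv : c ≠ v2 := fun h => hus (h ▸ hw')
          have hcv2 : G2.Adj c v2 := hsimp c v2 (ej_inr_inr.1 hadj') hadj2.symm hcv
          exact hcon v2 (Finset.mem_insert_self _ _) c (Finset.mem_insert_of_mem hc) hcv2.symm
      | inl c =>
          exact hne (ej_inl_inr.1 hadj'.symm).2

end Aux

/-- if `G_1, G_2` are well-covered and `v_i` is a simplicial vertex of `G_i`
whose closed neighborhood contains another simplicial vertex, then the edge-join
`(G_1;v_1) ⊖ (G_2;v_2)` is well-covered with `α(G) = α(G_1) + α(G_2)`. -/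
theorem stmt4 {V W : Type*} [Fintype V] [Fintype W]
    (G1 : SimpleGraph V) (G2 : SimpleGraph W) (v1 : V) (v2 : W)
    (h1 : WellCovered G1) (h2 : WellCovered G2)
    (hs1 : Simplicial G1 v1) (hs2 : Simplicial G2 v2)
    (hex1 : ∃ u, u ≠ v1 ∧ u ∈ G1.neighborSet v1 ∪ {v1} ∧ Simplicial G1 u)
    (hex2 : ∃ u, u ≠ v2 ∧ u ∈ G2.neighborSet v2 ∪ {v2} ∧ Simplicial G2 u) :
    WellCovered (edgeJoin G1 v1 G2 v2) ∧
      alpha (edgeJoin G1 v1 G2 v2) = alpha G1 + alpha G2 := by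
  have key : ∀ s : Finset (V ⊕ W), MaximalIndepFinset (edgeJoin G1 v1 G2 v2) s →
      s.card = alpha G1 + alpha G2 := by
    intro s hs
    have hl := toLeft_maximal hex1 hs
    have hr := toRight_maximal hex2 hs
    have hsum : s.toLeft.card + s.toRight.card = s.card :=
      Finset.card_toLeft_add_card_toRight
    rw [← hsum, card_eq_alpha h1 hl, card_eq_alpha h2 hr]
  constructor
  · intro s t hs ht
    rw [key s hs, key t ht]
  · obtain ⟨s, hs, hc⟩ := exists_maximal_alpha (edgeJoin G1 v1 G2 v2)
    rw [← hc, key s hs]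
end

section
/- For every n ≥ 1, the graph △_n and the graph K_2 ⊖ △_n are well-covered. -/
open Polynomial
open scoped Classical

lemma triChain_adj_same {n : ℕ} {x y : Fin (3*n)} (hxy : x ≠ y)
    (h : (x:ℕ)/3 = (y:ℕ)/3) : (triChain n).Adj x y := by
  rw [triChain, SimpleGraph.fromRel_adj]
  exact ⟨hxy, Or.inl (Or.inl h)⟩

lemma triChain_adj_two {n : ℕ} {x y : Fin (3*n)} (hy : (y:ℕ) % 3 = 2)
    (h : (triChain n).Adj x y) : (x:ℕ)/3 = (y:ℕ)/3 := by
  rw [triChain, SimpleGraph.fromRel_adj] at h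
  obtain ⟨-, h⟩ := h
  rcases h with (h | ⟨i, h1, h2⟩) | (h | ⟨i, h1, h2⟩) <;> omega

lemma mem_insert' {α : Type*} (i : DecidableEq α) {v a : α} {s : Finset α} :
    a ∈ @insert α (Finset α) (@Finset.instInsert α i) v s ↔ a = v ∨ a ∈ s :=
  @Finset.mem_insert α i s a v

lemma triChain_max_card {n : ℕ} (s : Finset (Fin (3*n)))
    (hs : MaximalIndepFinset (triChain n) s) : s.card = n := by
  obtain ⟨hind, hmax⟩ := hs
  have key : ∀ i : Fin n, ∃ a ∈ s, (a:ℕ)/3 = (i:ℕ) := by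
    intro i
    by_contra hc
    push_neg at hc
    have hin : 3 * (i:ℕ) + 2 < 3 * n := by have := i.isLt; omega
    set v : Fin (3*n) := ⟨3*(i:ℕ)+2, hin⟩ with hv
    have hvm : (v:ℕ) % 3 = 2 := by simp [hv]
    have hvd : (v:ℕ) / 3 = (i:ℕ) := by simp [hv]; omega
    have hnb : ∀ x ∈ s, ¬ (triChain n).Adj x v := by
      intro x hx hadj
      have hd := triChain_adj_two hvm hadj
      exact hc x hx (by omega)
    have hvs : v ∉ s := fun h => hc v h hvd
    apply hmax v hvs
    intro u hu w hw hadj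
    rcases (mem_insert' _).1 hu with rfl | hu <;>
      rcases (mem_insert' _).1 hw with rfl | hw
    · exact (triChain n).irrefl hadj
    · exact hnb w hw hadj.symm
    · exact hnb u hu hadj
    · exact hind u hu w hw hadj
  have hcard := Finset.card_bij
    (fun (a : Fin (3*n)) (_ : a ∈ s) => (⟨(a:ℕ)/3, by have := a.isLt; omega⟩ : Fin n))
    (fun a ha => Finset.mem_univ _)
    (fun a ha b hb hab => by
      by_contra hne
      have hq : (a:ℕ)/3 = (b:ℕ)/3 := by simpa using congrArg Fin.val hab
      exact hind a ha b hb (triChain_adj_same hne hq))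
    (fun i _ => by
      obtain ⟨a, ha, hdiv⟩ := key i
      exact ⟨a, ha, Fin.ext hdiv⟩)
  simpa using hcard

section Join

variable {n : ℕ} (h0 : 0 < 3*n)

lemma gj_adj_inl (a b : Fin 2) (hab : a ≠ b) : (edgeJoin (⊤ : SimpleGraph (Fin 2)) 1 (triChain n) ⟨0, h0⟩).Adj (Sum.inl a) (Sum.inl b) := by
  rw [edgeJoin, SimpleGraph.fromRel_adj]
  exact ⟨by simpa using hab, Or.inl (Or.inl ⟨a, b, rfl, rfl, by simpa using hab⟩)⟩

lemma gj_adj_inr {v w : Fin (3*n)} (h : (triChain n).Adj v w) :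
    (edgeJoin (⊤ : SimpleGraph (Fin 2)) 1 (triChain n) ⟨0, h0⟩).Adj (Sum.inr v) (Sum.inr w) := by
  rw [edgeJoin, SimpleGraph.fromRel_adj]
  exact ⟨by simpa using h.ne, Or.inl (Or.inr (Or.inl ⟨v, w, rfl, rfl, h⟩))⟩

lemma gj_nbhd_inl0 {y : Fin 2 ⊕ Fin (3*n)} (h : (edgeJoin (⊤ : SimpleGraph (Fin 2)) 1 (triChain n) ⟨0, h0⟩).Adj (Sum.inl 0) y) :
    y = Sum.inl 1 := by
  rw [edgeJoin, SimpleGraph.fromRel_adj] at h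
  obtain ⟨hne, h⟩ := h
  rcases h with (⟨a, b, h1, h2, h3⟩ | ⟨a, b, h1, h2, h3⟩ | ⟨h1, h2⟩) |
    (⟨a, b, h1, h2, h3⟩ | ⟨a, b, h1, h2, h3⟩ | ⟨h1, h2⟩) <;>
    simp_all <;> subst_vars <;> first | rfl | (exact absurd rfl (by omega)) | omega

lemma gj_nbhd_two {t : Fin (3*n)} (ht : (t:ℕ) % 3 = 2) {x : Fin 2 ⊕ Fin (3*n)}
    (h : (edgeJoin (⊤ : SimpleGraph (Fin 2)) 1 (triChain n) ⟨0, h0⟩).Adj x (Sum.inr t)) : ∃ w, x = Sum.inr w ∧ (w:ℕ)/3 = (t:ℕ)/3 := by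
  rw [edgeJoin, SimpleGraph.fromRel_adj] at h
  obtain ⟨hne, h⟩ := h
  rcases h with (⟨a, b, h1, h2, h3⟩ | ⟨a, b, h1, h2, h3⟩ | ⟨h1, h2⟩) |
    (⟨a, b, h1, h2, h3⟩ | ⟨a, b, h1, h2, h3⟩ | ⟨h1, h2⟩)
  · simp_all
  · refine ⟨a, h1, ?_⟩
    rw [Sum.inr.injEq] at h2; subst h2
    exact triChain_adj_two ht h3
  · rw [Sum.inr.injEq] at h2; subst h2
    simp at ht
  · simp_all
  · refine ⟨b, h2, ?_⟩
    rw [Sum.inr.injEq] at h1; subst h1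
    exact (triChain_adj_two ht h3.symm)
  · simp_all

end Join

lemma join_max_card {n : ℕ} (h0 : 0 < 3*n) (s : Finset (Fin 2 ⊕ Fin (3*n)))
    (hs : MaximalIndepFinset
      (edgeJoin (⊤ : SimpleGraph (Fin 2)) 1 (triChain n) ⟨0, h0⟩) s) :
    s.card = n + 1 := by
  set G := edgeJoin (⊤ : SimpleGraph (Fin 2)) 1 (triChain n) ⟨0, h0⟩ with hG
  obtain ⟨hind, hmax⟩ := hs
  -- some K2 vertex is in s
  have key0 : ∃ a : Fin 2, Sum.inl a ∈ s := by
    by_contra hc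
    push_neg at hc
    apply hmax (Sum.inl 0) (hc 0)
    intro u hu w hw hadj
    have hnb : ∀ x ∈ s, ¬ G.Adj x (Sum.inl 0) := by
      intro x hx hadj
      have := gj_nbhd_inl0 h0 hadj.symm
      subst this
      exact hc 1 hx
    rcases (mem_insert' _).1 hu with rfl | hu <;>
      rcases (mem_insert' _).1 hw with rfl | hw
    · exact G.irrefl hadj
    · exact hnb w hw hadj.symm
    · exact hnb u hu hadj
    · exact hind u hu w hw hadj
  -- each triangle has a vertex in s
  have key1 : ∀ i : Fin n, ∃ w : Fin (3*n), Sum.inr w ∈ s ∧ (w:ℕ)/3 = (i:ℕ) := by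
    intro i
    by_contra hc
    push_neg at hc
    have hin : 3 * (i:ℕ) + 2 < 3 * n := by have := i.isLt; omega
    set t : Fin (3*n) := ⟨3*(i:ℕ)+2, hin⟩ with ht
    have htm : (t:ℕ) % 3 = 2 := by simp [ht]
    have htd : (t:ℕ) / 3 = (i:ℕ) := by simp [ht]; omega
    have hts : Sum.inr t ∉ s := fun h => (hc t h) htd
    apply hmax (Sum.inr t) hts
    intro u hu w hw hadj
    have hnb : ∀ x ∈ s, ¬ G.Adj x (Sum.inr t) := by
      intro x hx hadj
      obtain ⟨w, rfl, hwd⟩ := gj_nbhd_two h0 htm hadj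
      exact hc w hx (by omega)
    rcases (mem_insert' _).1 hu with rfl | hu <;>
      rcases (mem_insert' _).1 hw with rfl | hw
    · exact G.irrefl hadj
    · exact hnb w hw hadj.symm
    · exact hnb u hu hadj
    · exact hind u hu w hw hadj
  -- bijection with Fin (n+1)
  have hcard := Finset.card_bij
    (fun (a : Fin 2 ⊕ Fin (3*n)) (_ : a ∈ s) =>
      match a with
      | Sum.inl _ => (0 : Fin (n+1))
      | Sum.inr w => (⟨(w:ℕ)/3 + 1, by have := w.isLt; omega⟩ : Fin (n+1)))
    (fun a ha => Finset.mem_univ _)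
    (fun a ha b hb hab => by
      match a, b with
      | Sum.inl a, Sum.inl b =>
        by_contra hne
        exact hind _ ha _ hb (gj_adj_inl h0 a b (by simpa using hne))
      | Sum.inl a, Sum.inr w => simp at hab
      | Sum.inr w, Sum.inl a => simp at hab
      | Sum.inr v, Sum.inr w =>
        by_contra hne
        have hq : (v:ℕ)/3 = (w:ℕ)/3 := by
          have := congrArg Fin.val hab; simp at this; omega
        have hvw : v ≠ w := by simpa using hne
        exact hind _ ha _ hb (gj_adj_inr h0 (triChain_adj_same hvw hq)))
    (fun i _ => by
      rcases Nat.eq_zero_or_pos (i:ℕ) with hi | hi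
      · obtain ⟨a, ha⟩ := key0
        exact ⟨Sum.inl a, ha, by simp; exact (Fin.ext hi.symm)⟩
      · have hin : (i:ℕ) - 1 < n := by have := i.isLt; omega
        obtain ⟨w, hw, hwd⟩ := key1 ⟨(i:ℕ)-1, hin⟩
        refine ⟨Sum.inr w, hw, ?_⟩
        simp only []
        exact Fin.ext (by simp at hwd ⊢; omega))
  simpa using hcard

/-- for every `n ≥ 1`, both `△_n` and `K_2 ⊖ △_n` are well-covered. -/
theorem stmt6 (n : ℕ) (hn : 1 ≤ n) :
    WellCovered (triChain n) ∧
    WellCovered (edgeJoin (⊤ : SimpleGraph (Fin 2)) 1 (triChain n) ⟨0, by omega⟩) := by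
  constructor
  · intro s t hs ht
    rw [triChain_max_card s hs, triChain_max_card t ht]
  · intro s t hs ht
    rw [join_max_card (by omega) s hs, join_max_card (by omega) t ht]
end

section
/- Let G_1, G_2 be finite simple graphs with vertices v_1 ∈ V(G_1), v_2 ∈ V(G_2), let P_4 be the path on vertices a, b, c, d with edges ab, bc, cd, and let G be the graph obtained from the disjoint union of G_1, P_4, G_2 by adding the edges v_1b and cv_2 (i.e., G = ((G_1;v_1) ⊖ (P_4;b); c) ⊖ (G_2;v_2)). Let H be the graph with V(H) = V(G) and E(H) = E(G) ∪ {ac} \ {cd}. Then I(G;x) = I(H;x). Moreover, if G_1 and G_2 are claw-free and v_1, v_2 are simplicial vertices of G_1, G_2 respectively, then I(G;x) is unimodal. -/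
open Polynomial
open scoped Classical

/-!
Moving the pendant edge `cd` to `ac` preserves the independence polynomial: independent sets
containing `a` and `c` correspond to those containing `c` and `d`, by trading `a` for `d`.
After the move `d` is isolated and `abc` is a triangle, so `H` is an edge-join of claw-free
graphs at simplicial vertices, hence claw-free.

Independence polynomials of claw-free graphs are log-concave, hence unimodal (Hamidoune). For
independent sets `A`, `B` with `|A| > |B|`, claw-freeness bounds the degrees of the bipartite
graph on `A ∆ B` by two, so each of its components has at most one more vertex in `A` than in
`B`. Exchanging `A` and `B` on the shortest initial run of components (in a fixed order) that
carries exactly one more vertex of `A` gives an injection from pairs of sizes `(k + 2, k)` into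
pairs of sizes `(k + 1, k + 1)`: the exchanged pair, read backwards, selects the same run.
-/

open Finset SimpleGraph
open scoped symmDiff

noncomputable section

variable {V : Type*}

section IndependentSets

lemma indepFinset_iff_isIndepSet {G : SimpleGraph V} {s : Finset V} :
    IndepFinset G s ↔ G.IsIndepSet (s : Set V) :=
  ⟨fun h _ hu _ hw _ => h _ hu _ hw, fun h _ hu _ hw huw => h hu hw huw.ne huw⟩

lemma indepFinset_insert {G : SimpleGraph V} {x : V} {S : Finset V} :
    IndepFinset G (insert x S) ↔ IndepFinset G S ∧ ∀ y ∈ S, ¬G.Adj x y := by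
  refine ⟨fun h => ⟨fun u hu w hw => h u (mem_insert_of_mem hu) w (mem_insert_of_mem hw),
    fun y hy => h x (mem_insert_self x S) y (mem_insert_of_mem hy)⟩, ?_⟩
  rintro ⟨hS, hx⟩ u hu w hw
  rcases mem_insert.mp hu with rfl | hu' <;> rcases mem_insert.mp hw with rfl | hw'
  · exact G.irrefl
  · exact hx w hw'
  · exact fun h => hx u hu' h.symm
  · exact hS u hu' w hw'

variable [Fintype V] {G : SimpleGraph V}

lemma mem_indepSetFinset_iff_indepFinset {s : Finset V} {k : ℕ} :
    s ∈ G.indepSetFinset k ↔ IndepFinset G s ∧ #s = k := by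
  rw [mem_indepSetFinset_iff, isNIndepSet_iff, indepFinset_iff_isIndepSet]

variable (G)

lemma indepPoly_eq_sum : indepPoly G = ∑ s ∈ univ.filter (IndepFinset G), X ^ #s := by
  simp only [indepPoly, powerset_univ]
  congr 1
  ext s
  simp [IndepFinset]

lemma coeff_indepPoly (k : ℕ) : (indepPoly G).coeff k = #(G.indepSetFinset k) := by
  simp only [indepPoly_eq_sum, finsetSum_coeff, coeff_X_pow, sum_boole, filter_filter]
  congr 2
  ext s
  simp only [mem_filter, mem_univ, true_and, mem_indepSetFinset_iff_indepFinset]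
  exact and_congr_right' eq_comm

lemma card_indepSetFinset_succ_eq_zero (k : ℕ) (h : #(G.indepSetFinset k) = 0) :
    #(G.indepSetFinset (k + 1)) = 0 := by
  rw [card_eq_zero, eq_empty_iff_forall_notMem] at h ⊢
  intro s hs
  obtain ⟨hs, hcard⟩ := mem_indepSetFinset_iff_indepFinset.mp hs
  obtain ⟨t, hts, htk⟩ := exists_subset_card_eq (show k ≤ #s by omega)
  exact h t (mem_indepSetFinset_iff_indepFinset.mpr
    ⟨fun u hu w hw => hs u (hts hu) w (hts hw), htk⟩)

lemma exists_card_indepSetFinset_succ_lt :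
    ∃ n, #(G.indepSetFinset (n + 1)) < #(G.indepSetFinset n) := by
  by_contra! h
  have hempty : ∅ ∈ G.indepSetFinset 0 :=
    mem_indepSetFinset_iff_indepFinset.mpr ⟨by simp [IndepFinset], card_empty⟩
  have hlarge : G.indepSetFinset (Fintype.card V + 1) = ∅ :=
    eq_empty_of_forall_notMem fun s hs => by
      have := card_le_univ s
      have := (mem_indepSetFinset_iff_indepFinset.mp hs).2
      omega
  have := monotone_nat_of_le_succ h (Nat.zero_le (Fintype.card V + 1))
  rw [hlarge, card_empty, Nat.le_zero, card_eq_zero] at this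
  exact notMem_empty _ (this ▸ hempty)

end IndependentSets

lemma exists_monotoneOn_antitoneOn_of_mul_le_sq {a : ℕ → ℕ}
    (hlc : ∀ k, a (k + 2) * a k ≤ a (k + 1) ^ 2) (hzero : ∀ k, a k = 0 → a (k + 1) = 0)
    (hdec : ∃ n, a (n + 1) < a n) :
    ∃ k, MonotoneOn a (Set.Iic k) ∧ AntitoneOn a (Set.Ici k) := by
  refine ⟨Nat.find hdec, monotoneOn_of_le_succ Set.ordConnected_Iic fun n _ _ hn => ?_,
    antitoneOn_nat_Ici_of_succ_le fun n hn => ?_⟩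
  · rw [Order.succ_eq_add_one] at hn ⊢
    exact not_lt.mp (Nat.find_min hdec (Set.mem_Iic.mp hn))
  have hstrict : ∀ n ≥ Nat.find hdec, a (n + 1) < a n ∨ a (n + 1) = 0 := by
    intro n hn
    induction n, hn using Nat.le_induction with
    | base => exact Or.inl (Nat.find_spec hdec)
    | succ n _ ih =>
      rcases ih with h | h
      · by_cases h0 : a (n + 1) = 0
        · exact Or.inr (hzero _ h0)
        · left
          by_contra! hge
          have := Nat.mul_le_mul_right (a n) hge
          have := Nat.mul_lt_mul_of_pos_left h (Nat.pos_of_ne_zero h0)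
          nlinarith [hlc n]
      · exact Or.inr (hzero _ h)
  rcases hstrict n hn with h | h <;> omega

lemma exists_eq_one_of_le_add_one {f : ℕ → ℤ} (h0 : f 0 = 0) (hf : ∀ m, f (m + 1) ≤ f m + 1)
    {n : ℕ} (hn : 1 ≤ f n) : ∃ m, f m = 1 := by
  induction n with
  | zero => omega
  | succ n ih =>
    by_cases h : 1 ≤ f n
    · exact ih h
    · exact ⟨n + 1, by linarith [hf n]⟩

namespace Finset

def exchange (S A B : Finset V) : Finset V := A \ S ∪ B ∩ S

def excess (A B S : Finset V) : ℤ := #(A ∩ S) - #(B ∩ S)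

lemma exchange_symmDiff_exchange (S A B : Finset V) :
    exchange S A B ∆ exchange S B A = A ∆ B := by
  ext x
  simp only [exchange, mem_symmDiff, mem_union, mem_sdiff, mem_inter]
  tauto

lemma exchange_exchange (S A B : Finset V) :
    exchange S (exchange S A B) (exchange S B A) = A := by
  ext x
  simp only [exchange, mem_union, mem_sdiff, mem_inter]
  tauto

lemma exchange_inter_of_subset {S P : Finset V} (A B : Finset V) (hP : P ⊆ S) :
    exchange S A B ∩ P = B ∩ P := by
  ext x
  have := @hP x
  simp only [exchange, mem_union, mem_sdiff, mem_inter]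
  tauto

lemma card_exchange (S A B : Finset V) : (#(exchange S A B) : ℤ) = #A - excess A B S := by
  have hdisj : Disjoint (A \ S) (B ∩ S) :=
    disjoint_left.mpr fun x hx hx' => (mem_sdiff.mp hx).2 (mem_inter.mp hx').2
  have := card_sdiff_add_card_inter A S
  rw [exchange, excess, card_union_of_disjoint hdisj]
  omega

lemma excess_comm (A B S : Finset V) : excess B A S = -excess A B S := by
  simp [excess]

lemma excess_union_of_disjoint (A B : Finset V) {S T : Finset V} (h : Disjoint S T) :
    excess A B (S ∪ T) = excess A B S + excess A B T := by
  simp only [excess, inter_union_distrib_left,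
    card_union_of_disjoint (h.mono inter_subset_right inter_subset_right)]
  push_cast
  ring

lemma excess_univ [Fintype V] (A B : Finset V) : excess A B univ = #A - #B := by
  simp [excess]

lemma excess_eq_sdiff (A B S : Finset V) :
    excess A B S = #(A \ B ∩ S) - #(B \ A ∩ S) := by
  have hA : #(A ∩ S) = #(A \ B ∩ S) + #(A ∩ B ∩ S) := by
    rw [← card_union_of_disjoint, ← union_inter_distrib_right, sdiff_union_inter]
    exact (disjoint_sdiff_inter A B).mono inter_subset_left inter_subset_left
  have hB : #(B ∩ S) = #(B \ A ∩ S) + #(A ∩ B ∩ S) := by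
    rw [inter_comm A B, ← card_union_of_disjoint, ← union_inter_distrib_right,
      sdiff_union_inter]
    exact (disjoint_sdiff_inter B A).mono inter_subset_left inter_subset_left
  simp only [excess, hA, hB]
  push_cast
  ring

end Finset

namespace SimpleGraph

lemma Connected.card_le_card_add_one_of_isBipartiteWith {W : Type*} [Fintype W]
    {Γ : SimpleGraph W} [DecidableRel Γ.Adj] (hΓ : Γ.Connected) {s t : Finset W}
    (hst : Γ.IsBipartiteWith s t) (hdeg : ∀ x ∈ t, Γ.degree x ≤ 2) : #s ≤ #t + 1 := by
  have hvert : #s + #t ≤ Fintype.card W := by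
    rw [← card_union_of_disjoint (disjoint_coe.mp hst.disjoint)]
    exact card_le_univ _
  have hedge : Fintype.card W ≤ #Γ.edgeFinset + 1 := by
    have := hΓ.card_vert_le_card_edgeSet_add_one
    rwa [Nat.card_eq_fintype_card, Nat.card_eq_fintype_card, ← edgeFinset_card] at this
  have hdeg_sum : #Γ.edgeFinset ≤ 2 * #t := by
    rw [← isBipartiteWith_sum_degrees_eq_card_edges' hst, mul_comm, ← smul_eq_mul,
      ← sum_const]
    exact sum_le_sum hdeg
  omega

abbrev symmDiffGraph (G : SimpleGraph V) (A B : Finset V) : SimpleGraph V :=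
  (G.induce ↑(A ∆ B)).spanningCoe

variable {G : SimpleGraph V}

lemma symmDiffGraph_adj {A B : Finset V} {x y : V} :
    (G.symmDiffGraph A B).Adj x y ↔ G.Adj x y ∧ x ∈ A ∆ B ∧ y ∈ A ∆ B := by
  simp [symmDiffGraph]

lemma symmDiffGraph_comm (A B : Finset V) : G.symmDiffGraph B A = G.symmDiffGraph A B := by
  rw [symmDiffGraph, symmDiffGraph, symmDiff_comm]

lemma symmDiffGraph_exchange (S A B : Finset V) :
    G.symmDiffGraph (exchange S B A) (exchange S A B) = G.symmDiffGraph A B := by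
  rw [symmDiffGraph, exchange_symmDiff_exchange, symmDiff_comm]

section PrefixComponents

variable [Fintype V] (K : SimpleGraph V)

def componentFinset (v : V) : Finset V := {x | K.Reachable v x}

@[simp] lemma mem_componentFinset {v x : V} : x ∈ K.componentFinset v ↔ K.Reachable v x := by
  simp [componentFinset]

def prefixComponents (m : ℕ) : Finset V :=
  {x | ∃ y, (Fintype.equivFin V y : ℕ) < m ∧ K.Reachable x y}

lemma prefixComponents_zero : K.prefixComponents 0 = ∅ := by
  simp [prefixComponents]

lemma prefixComponents_card : K.prefixComponents (Fintype.card V) = univ :=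
  eq_univ_of_forall fun x => by
    simp only [prefixComponents, mem_filter, mem_univ, true_and]
    exact ⟨x, (Fintype.equivFin V x).isLt, Reachable.refl x⟩

lemma prefixComponents_mono : Monotone K.prefixComponents := fun _ _ hmn _ => by
  simp only [prefixComponents, mem_filter, mem_univ, true_and]
  exact fun ⟨y, hy, hxy⟩ => ⟨y, hy.trans_le hmn, hxy⟩

variable {K}

lemma Reachable.mem_prefixComponents_iff {x y : V} (h : K.Reachable x y) {m : ℕ} :
    x ∈ K.prefixComponents m ↔ y ∈ K.prefixComponents m := by
  simp only [prefixComponents, mem_filter, mem_univ, true_and]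
  exact ⟨fun ⟨z, hz, hxz⟩ => ⟨z, hz, h.symm.trans hxz⟩,
    fun ⟨z, hz, hyz⟩ => ⟨z, hz, h.trans hyz⟩⟩

lemma prefixComponents_succ {m : ℕ} (hm : m < Fintype.card V) :
    K.prefixComponents (m + 1) =
      K.prefixComponents m ∪ K.componentFinset ((Fintype.equivFin V).symm ⟨m, hm⟩) := by
  ext x
  simp only [prefixComponents, mem_union, mem_filter, mem_univ, true_and, mem_componentFinset]
  constructor
  · rintro ⟨z, hz, hxz⟩
    by_cases hzm : (Fintype.equivFin V z : ℕ) < m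
    · exact Or.inl ⟨z, hzm, hxz⟩
    · have hz : z = (Fintype.equivFin V).symm ⟨m, hm⟩ :=
        (Fintype.equivFin V).eq_symm_apply.mpr (Fin.ext (by dsimp only; omega))
      exact Or.inr (hz ▸ hxz.symm)
  · rintro (⟨z, hz, hxz⟩ | hyx)
    · exact ⟨z, hz.trans (Nat.lt_succ_self m), hxz⟩
    · exact ⟨_, by simp, hyx.symm⟩

lemma prefixComponents_succ_of_card_le {m : ℕ} (hm : Fintype.card V ≤ m) :
    K.prefixComponents (m + 1) = K.prefixComponents m := by
  ext x
  simp only [prefixComponents, mem_filter, mem_univ, true_and]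
  refine exists_congr fun z => and_congr_left fun _ => ?_
  have := (Fintype.equivFin V z).isLt
  omega

/-- Each new vertex adds either nothing or one whole new component. -/
lemma excess_prefixComponents_succ_le {A B : Finset V}
    (hK : ∀ v, excess A B (K.componentFinset v) ≤ 1) (m : ℕ) :
    excess A B (K.prefixComponents (m + 1)) ≤ excess A B (K.prefixComponents m) + 1 := by
  by_cases hm : m < Fintype.card V
  · rw [prefixComponents_succ hm]
    set y := (Fintype.equivFin V).symm ⟨m, hm⟩
    by_cases hy : y ∈ K.prefixComponents m
    · rw [union_eq_left.mpr fun x hx =>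
        (Reachable.mem_prefixComponents_iff ((K.mem_componentFinset).mp hx)).mp hy]
      omega
    · rw [excess_union_of_disjoint _ _ (Finset.disjoint_left.mpr fun x hx hyx =>
        hy ((Reachable.mem_prefixComponents_iff ((K.mem_componentFinset).mp hyx)).mpr hx))]
      linarith [hK y]
  · rw [prefixComponents_succ_of_card_le (not_lt.mp hm)]
    omega

end PrefixComponents

end SimpleGraph

lemma ClawFree.card_adj_inter_le_two {G : SimpleGraph V} (hG : ClawFree G) {A : Finset V}
    (hA : IndepFinset G A) (x : V) : #{a ∈ A | G.Adj x a} ≤ 2 := by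
  by_contra! h
  obtain ⟨T, hTA, hT⟩ := exists_subset_card_eq h
  obtain ⟨a, b, c, hab, hac, hbc, rfl⟩ := card_eq_three.mp hT
  simp only [insert_subset_iff, singleton_subset_iff, mem_filter] at hTA
  obtain ⟨⟨ha, hxa⟩, ⟨hb, hxb⟩, ⟨hc, hxc⟩⟩ := hTA
  exact hG x a b c hxa hxb hxc hab hac hbc (hA a ha b hb) (hA a ha c hc) (hA b hb c hc)

/-- A connected graph has at least as many edges as vertices minus one, and here the degrees
of the vertices of `B \ A` are at most `2`. -/
lemma ClawFree.excess_componentFinset_le_one [Fintype V] {G : SimpleGraph V} (hG : ClawFree G)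
    {A B : Finset V} (hA : IndepFinset G A) (hB : IndepFinset G B) (v : V) :
    excess A B ((G.symmDiffGraph A B).componentFinset v) ≤ 1 := by
  set C := (G.symmDiffGraph A B).connectedComponentMk v
  have hC : ∀ x, x ∈ C.supp ↔ (G.symmDiffGraph A B).Reachable v x := fun x => by
    rw [ConnectedComponent.mem_supp_iff, ConnectedComponent.eq]
    exact ⟨Reachable.symm, Reachable.symm⟩
  set s := (A \ B).subtype (· ∈ C.supp)
  set t := (B \ A).subtype (· ∈ C.supp)
  have hbip : C.toSimpleGraph.IsBipartiteWith s t := by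
    refine ⟨disjoint_coe.mpr (Finset.disjoint_left.mpr fun x hs ht => ?_), fun x y hxy => ?_⟩
    · simp only [s, t, mem_subtype, mem_sdiff] at hs ht
      exact hs.2 ht.1
    · obtain ⟨hxy, hx, hy⟩ := symmDiffGraph_adj.mp hxy
      simp only [s, t, mem_coe, mem_subtype, mem_sdiff]
      rw [mem_symmDiff] at hx hy
      rcases hx with ⟨hxA, hxB⟩ | ⟨hxB, hxA⟩ <;> rcases hy with ⟨hyA, hyB⟩ | ⟨hyB, hyA⟩
      · exact absurd hxy (hA _ hxA _ hyA)
      · exact Or.inl ⟨⟨hxA, hxB⟩, hyB, hyA⟩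
      · exact Or.inr ⟨⟨hxB, hxA⟩, hyA, hyB⟩
      · exact absurd hxy (hB _ hxB _ hyB)
  have hdeg : ∀ x ∈ t, C.toSimpleGraph.degree x ≤ 2 := by
    intro x hx
    rw [← card_neighborFinset_eq_degree]
    refine (card_le_card_of_injOn Subtype.val (fun y hy => ?_)
      Subtype.val_injective.injOn).trans (hG.card_adj_inter_le_two hA x)
    have hys : y ∈ s := isBipartiteWith_neighborFinset_subset' hbip hx (mem_coe.mp hy)
    rw [mem_coe, mem_neighborFinset] at hy
    simp only [s, mem_subtype, mem_sdiff] at hys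
    exact mem_coe.mpr (mem_filter.mpr ⟨hys.1, (symmDiffGraph_adj.mp hy).1⟩)
  have hcard := C.connected_toSimpleGraph.card_le_card_add_one_of_isBipartiteWith hbip hdeg
  have hfilter (D : Finset V) :
      {x ∈ D | x ∈ C.supp} = D ∩ (G.symmDiffGraph A B).componentFinset v := by
    ext
    simp [hC]
  simp only [s, t, card_subtype, hfilter] at hcard
  rw [excess_eq_sdiff]
  omega

lemma IndepFinset.exchange {G : SimpleGraph V} {A B S : Finset V} (hA : IndepFinset G A)
    (hB : IndepFinset G B) (hS : ∀ x y, (G.symmDiffGraph A B).Adj x y → x ∈ S → y ∈ S) :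
    IndepFinset G (exchange S A B) := by
  have hcross : ∀ u w, u ∈ A → u ∉ S → w ∈ B → w ∈ S → ¬G.Adj u w := by
    intro u w huA huS hwB hwS huw
    by_cases huB : u ∈ B
    · exact hB u huB w hwB huw
    by_cases hwA : w ∈ A
    · exact hA u huA w hwA huw
    exact huS (hS w u (symmDiffGraph_adj.mpr ⟨huw.symm, mem_symmDiff.mpr (Or.inr ⟨hwB, hwA⟩),
      mem_symmDiff.mpr (Or.inl ⟨huA, huB⟩)⟩) hwS)
  intro u hu w hw
  simp only [Finset.exchange, mem_union, mem_sdiff, mem_inter] at hu hw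
  rcases hu with ⟨huA, huS⟩ | ⟨huB, huS⟩ <;> rcases hw with ⟨hwA, hwS⟩ | ⟨hwB, hwS⟩
  · exact hA u huA w hwA
  · exact hcross u w huA huS hwB hwS
  · exact fun h => hcross w u hwA hwS huB huS h.symm
  · exact hB u huB w hwB

namespace SimpleGraph

section Switch

variable [Fintype V] (G : SimpleGraph V)

def switchIndex (A B : Finset V) : ℕ :=
  sInf {m | excess A B ((G.symmDiffGraph A B).prefixComponents m) = 1}

def switchSet (A B : Finset V) : Finset V :=
  (G.symmDiffGraph A B).prefixComponents (G.switchIndex A B)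

def switch (p : Finset V × Finset V) : Finset V × Finset V :=
  (exchange (G.switchSet p.1 p.2) p.1 p.2, exchange (G.switchSet p.1 p.2) p.2 p.1)

variable {G}

lemma switchSet_closed (A B : Finset V) {x y : V} (h : (G.symmDiffGraph A B).Adj x y)
    (hx : x ∈ G.switchSet A B) : y ∈ G.switchSet A B :=
  h.reachable.mem_prefixComponents_iff.mp hx

lemma IndepFinset.switch {A B : Finset V} (hA : IndepFinset G A) (hB : IndepFinset G B) :
    IndepFinset G (G.switch (A, B)).1 ∧ IndepFinset G (G.switch (A, B)).2 := by
  refine ⟨hA.exchange hB fun x y h hx => switchSet_closed A B h hx, hB.exchange hA ?_⟩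
  rw [symmDiffGraph_comm]
  exact fun x y h hx => switchSet_closed A B h hx

variable {A B : Finset V} (hG : ClawFree G) (hA : IndepFinset G A) (hB : IndepFinset G B)
  (hAB : #B < #A)
include hG hA hB hAB

lemma excess_switchSet : excess A B (G.switchSet A B) = 1 := by
  have hex : ∃ m, excess A B ((G.symmDiffGraph A B).prefixComponents m) = 1 :=
    exists_eq_one_of_le_add_one
      (f := fun m => excess A B ((G.symmDiffGraph A B).prefixComponents m))
      (n := Fintype.card V) (by simp [prefixComponents_zero, excess])
      (excess_prefixComponents_succ_le (hG.excess_componentFinset_le_one hA hB))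
      (by rw [prefixComponents_card, excess_univ]; omega)
  exact Nat.sInf_mem hex

/-- Below the switching index, exchanging negates the excess, which reversing the order of the
pair undoes. -/
lemma switchIndex_exchange :
    G.switchIndex (exchange (G.switchSet A B) B A) (exchange (G.switchSet A B) A B) =
      G.switchIndex A B := by
  have hexcess : ∀ m ≤ G.switchIndex A B,
      excess (exchange (G.switchSet A B) B A) (exchange (G.switchSet A B) A B)
        ((G.symmDiffGraph A B).prefixComponents m) =
      excess A B ((G.symmDiffGraph A B).prefixComponents m) := fun m hm => by
    have hsub : _ ⊆ G.switchSet A B := (G.symmDiffGraph A B).prefixComponents_mono hm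
    simp only [excess, exchange_inter_of_subset _ _ hsub]
  have hS : excess A B ((G.symmDiffGraph A B).prefixComponents (G.switchIndex A B)) = 1 :=
    excess_switchSet hG hA hB hAB
  rw [switchIndex, symmDiffGraph_exchange]
  refine le_antisymm (Nat.sInf_le ((hexcess _ le_rfl).trans hS))
    (le_csInf ⟨G.switchIndex A B, (hexcess _ le_rfl).trans hS⟩ fun m hm => ?_)
  by_contra! hlt
  exact hlt.not_ge (Nat.sInf_le ((hexcess m hlt.le).symm.trans hm))

lemma switchSet_exchange :
    G.switchSet (exchange (G.switchSet A B) B A) (exchange (G.switchSet A B) A B) =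
      G.switchSet A B := by
  rw [switchSet, symmDiffGraph_exchange, switchIndex_exchange hG hA hB hAB, switchSet]

lemma card_switch : #(G.switch (A, B)).1 + 1 = #A ∧ #(G.switch (A, B)).2 = #B + 1 := by
  have h₁ := card_exchange (G.switchSet A B) A B
  have h₂ := card_exchange (G.switchSet A B) B A
  rw [excess_switchSet hG hA hB hAB] at h₁
  rw [excess_comm, excess_switchSet hG hA hB hAB] at h₂
  simp only [switch]
  omega

lemma switch_swap_switch : (G.switch (G.switch (A, B)).swap).swap = (A, B) := by
  simp only [switch, Prod.swap_prod_mk, switchSet_exchange hG hA hB hAB, exchange_exchange]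

end Switch

end SimpleGraph

section ClawFree

variable [Fintype V] {G : SimpleGraph V}

theorem ClawFree.card_indepSetFinset_mul_le_sq (hG : ClawFree G) (k : ℕ) :
    #(G.indepSetFinset (k + 2)) * #(G.indepSetFinset k) ≤ #(G.indepSetFinset (k + 1)) ^ 2 := by
  rw [sq, ← card_product, ← card_product]
  have hmem {A B : Finset V} (hp : (A, B) ∈ G.indepSetFinset (k + 2) ×ˢ G.indepSetFinset k) :
      IndepFinset G A ∧ IndepFinset G B ∧ #B < #A := by
    simp only [mem_product, mem_indepSetFinset_iff_indepFinset] at hp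
    exact ⟨hp.1.1, hp.2.1, by omega⟩
  apply card_le_card_of_injOn G.switch
  · rintro ⟨A, B⟩ hp
    obtain ⟨hA, hB, hAB⟩ := hmem hp
    obtain ⟨hA', hB'⟩ := IndepFinset.switch hA hB
    obtain ⟨hcA, hcB⟩ := card_switch hG hA hB hAB
    simp only [mem_coe, mem_product, mem_indepSetFinset_iff_indepFinset] at hp ⊢
    exact ⟨⟨hA', by omega⟩, hB', by omega⟩
  · rintro ⟨A, B⟩ hp ⟨A', B'⟩ hq hpq
    obtain ⟨hA, hB, hAB⟩ := hmem hp
    obtain ⟨hA', hB', hAB'⟩ := hmem hq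
    rw [← switch_swap_switch hG hA hB hAB, ← switch_swap_switch hG hA' hB' hAB', hpq]

theorem ClawFree.unimodal_indepPoly (hG : ClawFree G) : Unimodal (indepPoly G) := by
  obtain ⟨k, hmono, hanti⟩ := exists_monotoneOn_antitoneOn_of_mul_le_sq
    (a := fun k => #(G.indepSetFinset k)) hG.card_indepSetFinset_mul_le_sq
    (card_indepSetFinset_succ_eq_zero G) (exists_card_indepSetFinset_succ_lt G)
  refine ⟨k, fun i j hij hjk => ?_, fun i j hki hij => ?_⟩ <;>
    simp only [coeff_indepPoly, Nat.cast_le]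
  · exact hmono (hij.trans hjk) hjk hij
  · exact hanti hki (hki.trans hij) hij

end ClawFree

/-- Trading `a` for `d` matches the independent sets of `G` containing `a` and `c` with those of
the new graph containing `c` and `d`. -/
lemma indepPoly_eq_of_pendant [Fintype V] {G : SimpleGraph V} {a c d : V} (hac : a ≠ c)
    (hcd : G.Adj c d) (hd : ∀ x, G.Adj d x → x = c) (ha : ∀ x, G.Adj a x → G.Adj c x) :
    indepPoly G = indepPoly ((G ⊔ fromEdgeSet {s(a, c)}).deleteEdges {s(c, d)}) := by
  set H := (G ⊔ fromEdgeSet {s(a, c)}).deleteEdges {s(c, d)}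
  have hH : ∀ x y, H.Adj x y ↔ (G.Adj x y ∨ (x = a ∧ y = c ∨ x = c ∧ y = a) ∧ x ≠ y) ∧
      ¬(x = c ∧ y = d ∨ x = d ∧ y = c) := by
    simp only [H, deleteEdges_adj, sup_adj, fromEdgeSet_adj, Set.mem_singleton_iff, Sym2.eq,
      Sym2.rel_iff', Prod.mk.injEq, Prod.swap_prod_mk]
    tauto
  have hda : d ≠ a := by
    rintro rfl
    exact (ha c hcd.symm).ne rfl
  have hH_ac : H.Adj a c := (hH a c).mpr ⟨Or.inr ⟨Or.inl ⟨rfl, rfl⟩, hac⟩, by tauto⟩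
  have hH_d : ∀ x, ¬H.Adj d x := fun x h => by
    obtain ⟨h1 | ⟨h2 | h2, -⟩, h3⟩ := (hH d x).mp h
    · exact h3 (Or.inr ⟨rfl, hd x h1⟩)
    · exact hda h2.1
    · exact hcd.ne h2.1.symm
  have hHG : ∀ {x y}, H.Adj x y → G.Adj x y ∨ (x = a ∧ y = c ∨ x = c ∧ y = a) := fun h =>
    ((hH _ _).mp h).1.imp_right And.left
  have hGH : ∀ {x y}, G.Adj x y → H.Adj x y ∨ (x = c ∧ y = d ∨ x = d ∧ y = c) := fun h =>
    or_iff_not_imp_right.mpr fun hne => (hH _ _).mpr ⟨Or.inl h, hne⟩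
  rw [indepPoly_eq_sum, indepPoly_eq_sum]
  refine sum_nbij' (fun S => if a ∈ S ∧ c ∈ S then insert d (S.erase a) else S)
    (fun T => if c ∈ T ∧ d ∈ T then insert a (T.erase d) else T) ?_ ?_ ?_ ?_ ?_
  · intro S hS
    simp only [mem_filter, mem_univ, true_and] at hS ⊢
    split_ifs with hS_ac
    · refine indepFinset_insert.mpr ⟨fun u hu w hw h => ?_, fun y _ => hH_d y⟩
      rcases hHG h with h | ⟨rfl, -⟩ | ⟨-, rfl⟩
      · exact hS u (mem_of_mem_erase hu) w (mem_of_mem_erase hw) h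
      · exact ne_of_mem_erase hu rfl
      · exact ne_of_mem_erase hw rfl
    · intro u hu w hw h
      rcases hHG h with h | ⟨rfl, rfl⟩ | ⟨rfl, rfl⟩
      · exact hS u hu w hw h
      · exact hS_ac ⟨hu, hw⟩
      · exact hS_ac ⟨hw, hu⟩
  · intro T hT
    simp only [mem_filter, mem_univ, true_and] at hT ⊢
    split_ifs with hT_cd
    · refine indepFinset_insert.mpr ⟨fun u hu w hw h => ?_, fun y hy h => ?_⟩
      · rcases hGH h with h | ⟨-, rfl⟩ | ⟨rfl, -⟩
        · exact hT u (mem_of_mem_erase hu) w (mem_of_mem_erase hw) h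
        · exact ne_of_mem_erase hw rfl
        · exact ne_of_mem_erase hu rfl
      · rcases hGH (ha y h) with h | ⟨-, rfl⟩ | ⟨rfl, -⟩
        · exact hT c hT_cd.1 y (mem_of_mem_erase hy) h
        · exact ne_of_mem_erase hy rfl
        · exact hcd.ne rfl
    · intro u hu w hw h
      rcases hGH h with h | ⟨rfl, rfl⟩ | ⟨rfl, rfl⟩
      · exact hT u hu w hw h
      · exact hT_cd ⟨hu, hw⟩
      · exact hT_cd ⟨hw, hu⟩
  · intro S hS
    simp only [mem_filter, mem_univ, true_and] at hS
    by_cases hS_ac : a ∈ S ∧ c ∈ S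
    · have hdS : d ∉ S.erase a := fun h => hS c hS_ac.2 d (mem_of_mem_erase h) hcd
      rw [if_pos hS_ac, if_pos ⟨mem_insert_of_mem (mem_erase.mpr ⟨hac.symm, hS_ac.2⟩),
        mem_insert_self d _⟩, erase_insert hdS, insert_erase hS_ac.1]
    · rw [if_neg hS_ac, if_neg fun h => hS c h.1 d h.2 hcd]
  · intro T hT
    simp only [mem_filter, mem_univ, true_and] at hT
    by_cases hT_cd : c ∈ T ∧ d ∈ T
    · have haT : a ∉ T.erase d := fun h => hT a (mem_of_mem_erase h) c hT_cd.1 hH_ac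
      rw [if_pos hT_cd, if_pos ⟨mem_insert_self a _,
        mem_insert_of_mem (mem_erase.mpr ⟨hcd.ne, hT_cd.1⟩)⟩, erase_insert haT,
        insert_erase hT_cd.2]
    · rw [if_neg hT_cd, if_neg fun h => hT a h.1 c h.2 hH_ac]
  · intro S hS
    simp only [mem_filter, mem_univ, true_and] at hS
    split_ifs with hS_ac
    · have hdS : d ∉ S.erase a := fun h => hS c hS_ac.2 d (mem_of_mem_erase h) hcd
      rw [card_insert_of_notMem hdS, card_erase_add_one hS_ac.1]
    · rfl

section EdgeJoin

variable {W : Type*} {G : SimpleGraph V} {H : SimpleGraph W} {v : V} {w : W}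

@[simp] lemma edgeJoin_adj_inl_inl {a b : V} :
    (edgeJoin G v H w).Adj (.inl a) (.inl b) ↔ G.Adj a b := by
  simp only [edgeJoin, fromRel_adj]
  aesop (add forward safe SimpleGraph.Adj.symm, forward safe SimpleGraph.Adj.ne)

@[simp] lemma edgeJoin_adj_inr_inr {a b : W} :
    (edgeJoin G v H w).Adj (.inr a) (.inr b) ↔ H.Adj a b := by
  simp only [edgeJoin, fromRel_adj]
  aesop (add forward safe SimpleGraph.Adj.symm, forward safe SimpleGraph.Adj.ne)

@[simp] lemma edgeJoin_adj_inl_inr {a : V} {b : W} :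
    (edgeJoin G v H w).Adj (.inl a) (.inr b) ↔ a = v ∧ b = w := by
  simp [edgeJoin]

@[simp] lemma edgeJoin_adj_inr_inl {a : W} {b : V} :
    (edgeJoin G v H w).Adj (.inr a) (.inl b) ↔ a = w ∧ b = v := by
  simp [edgeJoin, and_comm]

lemma simplicial_edgeJoin_inr {x : W} (hx : Simplicial H x) (hxw : x ≠ w) :
    Simplicial (edgeJoin G v H w) (.inr x) := by
  rintro (a | a) (b | b) <;> simp_all [Simplicial]

/-- The bridge `vw` only enlarges the neighbourhoods of `v` and `w`, which are cliques. -/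
lemma clawFree_edgeJoin (hG : ClawFree G) (hH : ClawFree H) (hv : Simplicial G v)
    (hw : Simplicial H w) : ClawFree (edgeJoin G v H w) := by
  rintro (c | c) (x | x) (y | y) (z | z) <;> simp <;> grind [ClawFree, Simplicial]

end EdgeJoin

def trianglePlusPoint : SimpleGraph (Fin 4) :=
  (P4 ⊔ fromEdgeSet {s(0, 2)}).deleteEdges {s(2, 3)}

lemma clawFree_trianglePlusPoint : ClawFree trianglePlusPoint := by
  simp [ClawFree, trianglePlusPoint, P4, Fin.forall_fin_succ]

lemma simplicial_trianglePlusPoint_one : Simplicial trianglePlusPoint 1 := by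
  simp [Simplicial, trianglePlusPoint, P4, Fin.forall_fin_succ]

lemma simplicial_trianglePlusPoint_two : Simplicial trianglePlusPoint 2 := by
  simp [Simplicial, trianglePlusPoint, P4, Fin.forall_fin_succ]

end

/-- for `G = ((G_1;v_1) ⊖ (P_4;b);c) ⊖ (G_2;v_2)` and `H` obtained from `G`
by adding the edge `ac` and deleting the edge `cd`, one has `I(G;x) = I(H;x)`; moreover if
`G_1, G_2` are claw-free and `v_1, v_2` are simplicial, then `I(G;x)` is unimodal. -/
theorem stmt10 {V1 V2 : Type*} [Fintype V1] [Fintype V2]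
    (G1 : SimpleGraph V1) (G2 : SimpleGraph V2) (v1 : V1) (v2 : V2) :
    let G := edgeJoin (edgeJoin G1 v1 P4 1) (Sum.inr 2) G2 v2
    let H := (G ⊔ SimpleGraph.fromEdgeSet
        {s((Sum.inl (Sum.inr 0) : (V1 ⊕ Fin 4) ⊕ V2), Sum.inl (Sum.inr 2))}).deleteEdges
      {s((Sum.inl (Sum.inr 2) : (V1 ⊕ Fin 4) ⊕ V2), Sum.inl (Sum.inr 3))}
    indepPoly G = indepPoly H ∧
    (ClawFree G1 → ClawFree G2 → Simplicial G1 v1 → Simplicial G2 v2 →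
      Unimodal (indepPoly G)) := by
  intro G H
  have hGH : indepPoly G = indepPoly H := by
    refine indepPoly_eq_of_pendant (by simp) (by simp [G, P4]) ?_ ?_
    · rintro ((x | x) | x) h <;> simp_all [G, P4]
    · rintro ((x | x) | x) h <;> simp_all [G, P4]
  have hH : H = edgeJoin (edgeJoin G1 v1 trianglePlusPoint 1) (Sum.inr 2) G2 v2 := by
    ext ((x | x) | x) ((y | y) | y) <;> simp [G, H, trianglePlusPoint]
  refine ⟨hGH, fun hC1 hC2 hS1 hS2 => ?_⟩
  rw [hGH, hH]
  exact ClawFree.unimodal_indepPoly (clawFree_edgeJoin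
    (clawFree_edgeJoin hC1 clawFree_trianglePlusPoint hS1 simplicial_trianglePlusPoint_one) hC2
    (simplicial_edgeJoin_inr simplicial_trianglePlusPoint_two (by decide)) hS2)
end

section
/- For every n ≥ 2, the independence polynomial of the well-covered spider S_n satisfies I(S_n;x) = (1+x)·(1 + Σ_{k=1}^{n} [C(n,k)·2^k + C(n−1,k−1)]·x^k), it is unimodal, and its mode is unique and equals 1 + ((n−1) mod 3) + 2(⌈n/3⌉ − 1). -/
open Polynomial
open scoped Classical

/-!
Write an independent set of `S_n` as `A ⊔ B` with `A` its set of `a`-vertices and `B` its set of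
`b`-vertices: independence means `A ∩ B = ∅`, and `B ⊆ {b₀}` as soon as `b₀ ∈ B`. Summing over `A`
first and then over `B` gives `I(S_n) = (1 + x)(1 + 2x)^n + x(1 + x)^n`, whose coefficients are
`c₀ = 1` and `c_{k+1} = 2^{k+1} C(n,k+1) + 2^k C(n,k) + C(n,k)`.

Hence `c_{k+2} - c_{k+1} = (2^{k+2} C(n,k+2) + C(n,k+1)) - (2^k C(n,k) + C(n,k))`. Multiplying by
`(k+1)(k+2)` and using `C(n,k+2)(k+1)(k+2) = C(n,k)·d(d-1)` with `d = n - k` turns its sign into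
that of a polynomial in `k`, `d` and `2^k`, which is positive when `3k + 3 ≤ 2n` and negative when
`2n ≤ 3k + 2`. So the coefficients increase strictly up to `m = n - ⌊(n-1)/3⌋` and decrease after.
-/

open Finset

theorem indepPoly_eq_sum_ite {V : Type*} [Fintype V] (G : SimpleGraph V) :
    indepPoly G = ∑ s : Finset V, if IndepFinset G s then X ^ #s else 0 := by
  rw [indepPoly, powerset_univ, sum_filter]
  exact sum_congr rfl fun s _ ↦ by split_ifs <;> first | rfl | contradiction

theorem Finset.sum_disjoint_pow_card {ι R : Type*} [Fintype ι] [DecidableEq ι] [CommSemiring R]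
    (x : R) (t : Finset ι) :
    ∑ s : Finset ι with Disjoint s t, x ^ #s = (1 + x) ^ (Fintype.card ι - #t) := by
  have hfilter : ({s : Finset ι | Disjoint s t} : Finset (Finset ι)) = tᶜ.powerset := by
    ext s
    simp [subset_compl_iff_disjoint_right]
  rw [hfilter, ← card_compl, add_comm, ← sum_pow_mul_eq_add_pow]
  simp

theorem spider_indepFinset_disjSum_iff (n : ℕ) (A B : Finset (Fin (n + 1))) :
    IndepFinset (spider n) (A.disjSum B) ↔ Disjoint A B ∧ (0 ∈ B → B ⊆ {0}) := by
  constructor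
  · intro h
    refine ⟨disjoint_left.2 fun a ha hb ↦ ?_, fun h0 b hb ↦ mem_singleton.2 ?_⟩
    · exact h (.inl a) (by simpa) (.inr a) (by simpa) (by simp [spider])
    · by_contra hb0
      exact h (.inr 0) (by simpa) (.inr b) (by simpa) (by simp [spider, hb0, Ne.symm hb0])
  · rintro ⟨hAB, hB⟩ u hu v hv huv
    rw [spider, SimpleGraph.fromRel_adj] at huv
    rcases huv with ⟨-, (⟨i, rfl, rfl⟩ | ⟨i, rfl, rfl, hi⟩) | (⟨i, rfl, rfl⟩ | ⟨i, rfl, rfl, hi⟩)⟩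
    · exact disjoint_left.1 hAB (inl_mem_disjSum.1 hu) (inr_mem_disjSum.1 hv)
    · exact hi (mem_singleton.1 (hB (inr_mem_disjSum.1 hu) (inr_mem_disjSum.1 hv)))
    · exact disjoint_left.1 hAB (inl_mem_disjSum.1 hv) (inr_mem_disjSum.1 hu)
    · exact hi (mem_singleton.1 (hB (inr_mem_disjSum.1 hv) (inr_mem_disjSum.1 hu)))

noncomputable def spiderPoly (n : ℕ) : ℤ[X] := (1 + X) * (1 + 2 * X) ^ n + X * (1 + X) ^ n

theorem sum_indepFinset_spider_disjSum (n : ℕ) (B : Finset (Fin (n + 1))) :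
    ∑ A : Finset (Fin (n + 1)),
        (if IndepFinset (spider n) (A.disjSum B) then (X : ℤ[X]) ^ #(A.disjSum B) else 0) =
      if 0 ∈ B → B ⊆ {0} then X ^ #B * (1 + X) ^ (n + 1 - #B) else 0 := by
  simp only [spider_indepFinset_disjSum_iff, card_disjSum, and_comm (a := Disjoint _ _), ite_and]
  split_ifs
  · have hA := sum_disjoint_pow_card (X : ℤ[X]) B
    rw [Fintype.card_fin] at hA
    rw [← sum_filter, ← hA, mul_sum]
    exact sum_congr rfl fun A _ ↦ by rw [add_comm, pow_add]
  · simp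

theorem indepPoly_spider (n : ℕ) : indepPoly (spider n) = spiderPoly n := by
  rw [indepPoly_eq_sum_ite, ← sumEquiv.toEquiv.symm.sum_comp, Fintype.sum_prod_type_right]
  refine (sum_congr rfl fun B _ ↦ sum_indepFinset_spider_disjSum n B).trans ?_
  rw [← sum_filter_add_sum_filter_not univ (fun B : Finset (Fin (n + 1)) ↦ 0 ∈ B) (M := ℤ[X]),
    add_comm, spiderPoly]
  congr 1
  · have hS : ({B | 0 ∉ B} : Finset (Finset (Fin (n + 1)))) = ({0}ᶜ : Finset _).powerset := by
      ext B
      simp [subset_compl_singleton]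
    have hcard : #({0}ᶜ : Finset (Fin (n + 1))) = n := by simp [card_compl]
    have hbinom := sum_pow_mul_eq_add_pow (X : ℤ[X]) (1 + X) ({0}ᶜ : Finset (Fin (n + 1)))
    rw [hcard] at hbinom
    rw [hS, show (1 : ℤ[X]) + 2 * X = X + (1 + X) by ring, ← hbinom, mul_sum]
    refine sum_congr rfl fun B hB ↦ ?_
    have h0 : 0 ∉ B := subset_compl_singleton.1 (mem_powerset.1 hB)
    have hBn : #B ≤ n := card_le_card (mem_powerset.1 hB) |>.trans_eq hcard
    rw [if_pos fun h ↦ absurd h h0, show n + 1 - #B = n - #B + 1 by omega, pow_succ]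
    ring
  · rw [sum_eq_single_of_mem {0} (by simp)]
    · simp
    · intro B hB hne
      rw [if_neg]
      simp only [mem_filter, mem_univ, true_and] at hB
      simp [hB, subset_singleton_iff, hne, ne_empty_of_mem hB]

theorem coeff_one_add_two_mul_X_pow (n k : ℕ) :
    ((1 + 2 * X : ℤ[X]) ^ n).coeff k = (n.choose k * 2 ^ k : ℕ) := by
  have hcomp : (1 + 2 * X : ℤ[X]) ^ n = ((1 + X) ^ n).comp (C 2 * X) := by simp
  rw [hcomp, comp_C_mul_X_coeff, coeff_one_add_X_pow]
  rfl

theorem one_add_two_mul_X_pow_eq_sum (n : ℕ) :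
    (1 + 2 * X : ℤ[X]) ^ n = ∑ k ∈ range (n + 1), ((n.choose k * 2 ^ k : ℕ) : ℤ[X]) * X ^ k := by
  rw [add_comm, add_pow]
  refine sum_congr rfl fun k _ ↦ ?_
  push_cast
  ring

theorem one_add_X_pow_eq_sum (n : ℕ) :
    (1 + X : ℤ[X]) ^ n = ∑ k ∈ range (n + 1), (n.choose k : ℤ[X]) * X ^ k := by
  rw [add_comm, add_pow]
  exact sum_congr rfl fun k _ ↦ by ring

theorem one_add_sum_Icc_choose (n : ℕ) (hn : 1 ≤ n) :
    1 + ∑ k ∈ Icc 1 n, ((n.choose k * 2 ^ k + (n - 1).choose (k - 1) : ℕ) : ℤ[X]) * X ^ k =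
      (1 + 2 * X) ^ n + X * (1 + X) ^ (n - 1) := by
  obtain ⟨m, rfl⟩ := Nat.exists_eq_add_of_le' hn
  rw [one_add_two_mul_X_pow_eq_sum, one_add_X_pow_eq_sum, sum_range_succ', mul_sum,
    ← Ico_add_one_right_eq_Icc, sum_Ico_eq_sum_range, add_comm, add_right_comm _ _ (∑ i ∈ _, _)]
  simp only [Nat.add_sub_cancel, Nat.choose_zero_right, pow_zero]
  rw [← sum_add_distrib]
  congr 1
  · refine sum_congr rfl fun k _ ↦ ?_
    rw [add_comm 1 k, Nat.add_sub_cancel]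
    push_cast
    ring
  · simp

theorem spiderPoly_eq_one_add_X_mul (n : ℕ) (hn : 1 ≤ n) :
    spiderPoly n = (1 + X) * (1 + ∑ k ∈ Icc 1 n,
      ((n.choose k * 2 ^ k + (n - 1).choose (k - 1) : ℕ) : ℤ[X]) * X ^ k) := by
  obtain ⟨m, rfl⟩ := Nat.exists_eq_add_of_le' hn
  rw [one_add_sum_Icc_choose _ hn, spiderPoly, Nat.add_sub_cancel]
  ring

theorem choose_add_two_mul_two_pow_add_choose_succ (n k : ℕ) :
    (k + 1) * (k + 2) * (n.choose (k + 2) * 2 ^ (k + 2) + n.choose (k + 1)) =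
      n.choose k * (2 ^ (k + 2) * ((n - k) * (n - k - 1)) + (k + 2) * (n - k)) := by
  have h1 := Nat.choose_succ_right_eq n k
  have h2 := Nat.choose_succ_right_eq n (k + 1)
  rw [← Nat.sub_sub] at h2
  calc (k + 1) * (k + 2) * (n.choose (k + 2) * 2 ^ (k + 2) + n.choose (k + 1))
      = 2 ^ (k + 2) * (k + 1) * (n.choose (k + 1 + 1) * (k + 1 + 1)) +
          (k + 2) * (n.choose (k + 1) * (k + 1)) := by ring
    _ = (2 ^ (k + 2) * (n - k - 1) + (k + 2)) * (n.choose (k + 1) * (k + 1)) := by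
      rw [h2]; ring
    _ = n.choose k * (2 ^ (k + 2) * ((n - k) * (n - k - 1)) + (k + 2) * (n - k)) := by
      rw [h1]; ring

theorem choose_mul_two_pow_add_choose_lt (n k : ℕ) (h : 3 * (k + 1) ≤ 2 * n) :
    n.choose k * 2 ^ k + n.choose k < n.choose (k + 2) * 2 ^ (k + 2) + n.choose (k + 1) := by
  obtain ⟨e, rfl⟩ : ∃ e, n = k + 2 + e := ⟨n - (k + 2), by omega⟩
  refine Nat.lt_of_mul_lt_mul_left (a := (k + 1) * (k + 2)) ?_
  rw [choose_add_two_mul_two_pow_add_choose_succ, show k + 2 + e - k = e + 2 by omega,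
    show e + 2 - 1 = e + 1 by omega, pow_add]
  have hc : 0 < (k + 2 + e).choose k := Nat.choose_pos (by omega)
  have hp : k < 2 ^ k := Nat.lt_two_pow_self
  generalize 2 ^ k = p at hp ⊢
  have hsq : (k + 3) * (k + 1) ≤ 4 * ((e + 2) * (e + 1)) := by nlinarith
  have key :
      (k + 1) * (k + 2) * (p + 1) < p * 2 ^ 2 * ((e + 2) * (e + 1)) + (k + 2) * (e + 2) := by
    nlinarith [Nat.mul_le_mul_left p hsq]
  calc (k + 1) * (k + 2) * ((k + 2 + e).choose k * p + (k + 2 + e).choose k)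
      = (k + 2 + e).choose k * ((k + 1) * (k + 2) * (p + 1)) := by ring
    _ < (k + 2 + e).choose k * (p * 2 ^ 2 * ((e + 2) * (e + 1)) + (k + 2) * (e + 2)) := by
      gcongr

theorem choose_add_two_mul_two_pow_add_choose_succ_lt (n k : ℕ) (hk : k ≤ n)
    (h : 2 * n ≤ 3 * k + 2) :
    n.choose (k + 2) * 2 ^ (k + 2) + n.choose (k + 1) < n.choose k * 2 ^ k + n.choose k := by
  obtain ⟨d, rfl⟩ := Nat.exists_eq_add_of_le hk
  refine Nat.lt_of_mul_lt_mul_left (a := (k + 1) * (k + 2)) ?_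
  rw [choose_add_two_mul_two_pow_add_choose_succ, Nat.add_sub_cancel_left, pow_add]
  have hc : 0 < (k + d).choose k := Nat.choose_pos (by omega)
  have hp : k < 2 ^ k := Nat.lt_two_pow_self
  generalize 2 ^ k = p at hp ⊢
  have key : p * 2 ^ 2 * (d * (d - 1)) + (k + 2) * d < (k + 1) * (k + 2) * (p + 1) := by
    rcases d with _ | e
    · simp only [zero_mul, mul_zero, add_zero]
      positivity
    · rw [Nat.add_sub_cancel]
      have hsq : 4 * ((e + 1) * e) ≤ (k + 2) * k := by nlinarith
      nlinarith [Nat.mul_le_mul_left p hsq]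
  calc (k + d).choose k * (p * 2 ^ 2 * (d * (d - 1)) + (k + 2) * d)
      < (k + d).choose k * ((k + 1) * (k + 2) * (p + 1)) := by gcongr
    _ = (k + 1) * (k + 2) * ((k + d).choose k * p + (k + d).choose k) := by ring

theorem coeff_spiderPoly_zero (n : ℕ) : (spiderPoly n).coeff 0 = 1 := by
  simp [spiderPoly, coeff_one_add_two_mul_X_pow, mul_coeff_zero]

theorem coeff_spiderPoly_succ (n k : ℕ) :
    (spiderPoly n).coeff (k + 1) =
      (n.choose (k + 1) * 2 ^ (k + 1) + n.choose k * 2 ^ k + n.choose k : ℕ) := by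
  rw [spiderPoly, add_mul, one_mul, coeff_add, coeff_add, coeff_X_mul, coeff_X_mul,
    coeff_one_add_two_mul_X_pow, coeff_one_add_two_mul_X_pow, coeff_one_add_X_pow]
  push_cast
  ring

theorem coeff_spiderPoly_lt_succ (n k : ℕ) (h : 3 * k ≤ 2 * n) :
    (spiderPoly n).coeff k < (spiderPoly n).coeff (k + 1) := by
  rcases k with _ | k
  · rw [coeff_spiderPoly_zero, coeff_spiderPoly_succ]
    simp
  · rw [coeff_spiderPoly_succ, coeff_spiderPoly_succ, Nat.cast_lt]
    have := choose_mul_two_pow_add_choose_lt n k (by omega)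
    linarith

theorem coeff_spiderPoly_succ_lt (n k : ℕ) (hk : k ≤ n + 1) (h : 2 * n + 1 ≤ 3 * k) :
    (spiderPoly n).coeff (k + 1) < (spiderPoly n).coeff k := by
  obtain ⟨j, rfl⟩ : ∃ j, k = j + 1 := ⟨k - 1, by omega⟩
  rw [coeff_spiderPoly_succ, coeff_spiderPoly_succ, Nat.cast_lt]
  have := choose_add_two_mul_two_pow_add_choose_succ_lt n j (by omega) (by omega)
  linarith

theorem coeff_spiderPoly_succ_le (n k : ℕ) (h : 2 * n + 1 ≤ 3 * k) :
    (spiderPoly n).coeff (k + 1) ≤ (spiderPoly n).coeff k := by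
  rcases le_or_gt k (n + 1) with hk | hk
  · exact (coeff_spiderPoly_succ_lt n k hk h).le
  · obtain ⟨j, rfl⟩ : ∃ j, k = j + 1 := ⟨k - 1, by omega⟩
    rw [coeff_spiderPoly_succ, coeff_spiderPoly_succ, Nat.choose_eq_zero_of_lt (by omega : n < j),
      Nat.choose_eq_zero_of_lt (by omega : n < j + 1),
      Nat.choose_eq_zero_of_lt (by omega : n < j + 1 + 1)]
    simp

/-- for `n ≥ 2`,
`I(S_n;x) = (1+x)·(1 + Σ_{k=1}^n [C(n,k)·2^k + C(n−1,k−1)]·x^k)`, it is unimodal, and its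
mode is unique and equals `1 + ((n−1) mod 3) + 2(⌈n/3⌉ − 1)`. -/
theorem stmt11 (n : ℕ) (hn : 2 ≤ n) :
    let m : ℕ := 1 + (n - 1) % 3 + 2 * ((n + 2) / 3 - 1)
    indepPoly (spider n) =
      (1 + Polynomial.X) *
        (1 + ∑ k ∈ Finset.Icc 1 n,
          ((n.choose k * 2 ^ k + (n - 1).choose (k - 1) : ℕ) : Polynomial ℤ) *
            Polynomial.X ^ k) ∧
    (∀ i j : ℕ, i ≤ j → j ≤ m →
      (indepPoly (spider n)).coeff i ≤ (indepPoly (spider n)).coeff j) ∧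
    (∀ i j : ℕ, m ≤ i → i ≤ j →
      (indepPoly (spider n)).coeff j ≤ (indepPoly (spider n)).coeff i) ∧
    (indepPoly (spider n)).coeff (m - 1) < (indepPoly (spider n)).coeff m ∧
    (indepPoly (spider n)).coeff (m + 1) < (indepPoly (spider n)).coeff m := by
  intro m
  rw [indepPoly_spider]
  have hup : ∀ k < m, (spiderPoly n).coeff k < (spiderPoly n).coeff (k + 1) :=
    fun k hk ↦ coeff_spiderPoly_lt_succ n k (by omega)
  have hdown : ∀ k, m ≤ k → (spiderPoly n).coeff (k + 1) ≤ (spiderPoly n).coeff k :=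
    fun k hk ↦ coeff_spiderPoly_succ_le n k (by omega)
  refine ⟨spiderPoly_eq_one_add_X_mul n (by omega), fun i j hij hjm ↦ ?_,
    fun i j hmi hij ↦ ?_, ?_, coeff_spiderPoly_succ_lt n m (by omega) (by omega)⟩
  · exact monotoneOn_of_le_add_one Set.ordConnected_Iic (fun k _ _ hk ↦ (hup k hk).le)
      (hij.trans hjm) hjm hij
  · exact antitoneOn_of_add_one_le Set.ordConnected_Ici (fun k _ hk _ ↦ hdown k hk)
      hmi (hmi.trans hij) hij
  · simpa [Nat.sub_add_cancel (show 1 ≤ m by omega)] using hup (m - 1) (by omega)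
end

section
/- For every n ≥ 1 the independence polynomial I(W_n;x) of the centipede W_n is unimodal, and for n ≥ 2 it satisfies the recurrence I(W_n;x) = (1+x)·(I(W_{n−1};x) + x·I(W_{n−2};x)), where I(W_0;x) = 1 and I(W_1;x) = 1 + 2x. -/
/-!
Deleting the last spine vertex `b_n` of `W_n` leaves `W_{n-1}` together with the isolated leaf
`a_n`, and deleting its closed neighbourhood leaves `W_{n-2}` together with the isolated leaf
`a_{n-1}`; the vertex-deletion recurrence `I(G) = I(G - v) + x I(G - N[v])` therefore gives the
recurrence of the theorem.

For unimodality write `p ≼ q` when `p_{k+1} / p_k ≤ q_{k+1} / q_k` for all `k`. This relation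
is additive in each argument, is preserved by multiplication by `x` and by `1 + x`, and is
transitive through a middle term whose coefficients are positive on an interval. For
`b = I(W_{n+1})` and `c = I(W_n)` the conditions `c ≼ b ≼ x c` and `(1 + x) c ≼ b` propagate
through the recurrence; they give `c ≼ x c`, which is log-concavity, and a log-concave sequence
without internal zeros is unimodal.
-/

open Polynomial
open scoped Classical

open Finset

section IndepPolyOn

variable {V W : Type*}

noncomputable def indepPolyOn (G : SimpleGraph V) (A : Finset V) : ℤ[X] :=
  ∑ s ∈ A.powerset.filter (IndepFinset G), X ^ s.card

theorem indepPoly_eq_indepPolyOn_univ [Fintype V] (G : SimpleGraph V) :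
    indepPoly G = indepPolyOn G univ := by
  unfold indepPoly indepPolyOn IndepFinset
  congr

@[simp]
theorem indepPolyOn_empty (G : SimpleGraph V) : indepPolyOn G ∅ = 1 := by
  simp [indepPolyOn, filter_singleton, IndepFinset]

theorem IndepFinset.mono {G : SimpleGraph V} {s t : Finset V} (h : IndepFinset G t)
    (hst : s ⊆ t) : IndepFinset G s :=
  fun u hu w hw => h u (hst hu) w (hst hw)

theorem indepFinset_insert_iff [DecidableEq V] {G : SimpleGraph V} {v : V} {s : Finset V} :
    IndepFinset G (insert v s) ↔ IndepFinset G s ∧ ∀ w ∈ s, ¬ G.Adj v w := by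
  simp only [IndepFinset, mem_insert, forall_eq_or_imp, G.irrefl, not_false_eq_true, true_and]
  constructor
  · rintro ⟨hv, hs⟩
    exact ⟨fun u hu => (hs u hu).2, hv⟩
  · rintro ⟨hs, hv⟩
    exact ⟨hv, fun u hu => ⟨fun h => hv u hu h.symm, hs u hu⟩⟩

theorem indepPolyOn_eq_erase_add [DecidableEq V] (G : SimpleGraph V) {A : Finset V} {v : V}
    (hv : v ∈ A) :
    indepPolyOn G A = indepPolyOn G (A.erase v) +
      X * indepPolyOn G (A.filter fun w => w ≠ v ∧ ¬ G.Adj v w) := by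
  rw [indepPolyOn, ← sum_filter_not_add_sum_filter _ (v ∈ ·)]
  congr 1
  · refine sum_congr ?_ fun _ _ => rfl
    ext s
    simp [subset_erase, and_assoc, and_comm]
  · rw [indepPolyOn, mul_sum]
    refine sum_nbij' (·.erase v) (insert v) ?_ ?_ ?_ ?_ ?_
    · intro s hs
      simp only [mem_filter, mem_powerset] at hs ⊢
      obtain ⟨⟨hsA, hind⟩, hvs⟩ := hs
      refine ⟨fun w hw => ?_, hind.mono (erase_subset v s)⟩
      obtain ⟨hwv, hws⟩ := mem_erase.mp hw
      exact mem_filter.mpr ⟨hsA hws, hwv, hind v hvs w hws⟩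
    · intro t ht
      simp only [mem_filter, mem_powerset, Finset.subset_iff] at ht ⊢
      obtain ⟨ht, hind⟩ := ht
      exact ⟨⟨insert_subset hv fun w hw => (ht hw).1,
        indepFinset_insert_iff.mpr ⟨hind, fun w hw => (ht hw).2.2⟩⟩, mem_insert_self v t⟩
    · intro s hs
      exact insert_erase (mem_filter.mp hs).2
    · intro t ht
      simp only [mem_filter, mem_powerset, Finset.subset_iff] at ht
      exact erase_insert fun hvt => (ht.1 hvt).2.1 rfl
    · intro s hs
      rw [← pow_succ', card_erase_add_one (mem_filter.mp hs).2]

theorem indepPolyOn_eq_one_add_X_mul_erase [DecidableEq V] (G : SimpleGraph V) {A : Finset V}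
    {v : V} (hv : v ∈ A) (hiso : ∀ w ∈ A, ¬ G.Adj v w) :
    indepPolyOn G A = (1 + X) * indepPolyOn G (A.erase v) := by
  have hnon : (A.filter fun w => w ≠ v ∧ ¬ G.Adj v w) = A.erase v := by
    ext w
    simp only [mem_filter, mem_erase]
    exact ⟨fun h => ⟨h.2.1, h.1⟩, fun h => ⟨h.2, h.1, hiso w h.2⟩⟩
  rw [indepPolyOn_eq_erase_add G hv, hnon]
  ring

theorem indepPolyOn_map {G : SimpleGraph V} {H : SimpleGraph W} (f : G ↪g H) (A : Finset V) :
    indepPolyOn H (A.map f.toEmbedding) = indepPolyOn G A := by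
  have hind : ∀ s : Finset V, IndepFinset H (s.map f.toEmbedding) ↔ IndepFinset G s := by
    intro s
    simp [IndepFinset]
  have hsets : (A.map f.toEmbedding).powerset.filter (IndepFinset H) =
      (A.powerset.filter (IndepFinset G)).map (mapEmbedding f.toEmbedding).toEmbedding := by
    ext t
    simp only [mem_filter, mem_powerset, mem_map, subset_map_iff]
    constructor
    · rintro ⟨⟨s, hsA, rfl⟩, hs⟩
      exact ⟨s, ⟨hsA, (hind s).mp hs⟩, rfl⟩
    · rintro ⟨s, ⟨hsA, hs⟩, rfl⟩
      exact ⟨⟨s, hsA, rfl⟩, (hind s).mpr hs⟩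
  rw [indepPolyOn, hsets, sum_map, indepPolyOn]
  simp

end IndepPolyOn

section Centipede

variable {n : ℕ}

@[simp]
theorem centipede_adj_inl_inl (i j : Fin n) : ¬ (centipede n).Adj (.inl i) (.inl j) := by
  simp [centipede]

@[simp]
theorem centipede_adj_inl_inr (i j : Fin n) : (centipede n).Adj (.inl i) (.inr j) ↔ i = j := by
  simp [centipede, eq_comm]

@[simp]
theorem centipede_adj_inr_inl (i j : Fin n) : (centipede n).Adj (.inr i) (.inl j) ↔ i = j := by
  simp [centipede]

@[simp]
theorem centipede_adj_inr_inr (i j : Fin n) :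
    (centipede n).Adj (.inr i) (.inr j) ↔ (i : ℕ) + 1 = j ∨ (j : ℕ) + 1 = i := by
  simp [centipede]
  rintro h rfl
  omega

def centipedeCastSucc (n : ℕ) : centipede n ↪g centipede (n + 1) where
  toFun := Sum.map Fin.castSucc Fin.castSucc
  inj' := Sum.map_injective.mpr ⟨Fin.castSucc_injective n, Fin.castSucc_injective n⟩
  map_rel_iff' {x y} := by
    rcases x with i | i <;> rcases y with j | j <;> simp [Fin.ext_iff]

theorem univ_erase_inr_last (n : ℕ) :
    (univ : Finset (Fin (n + 1) ⊕ Fin (n + 1))).erase (.inr (Fin.last n)) =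
      insert (.inl (Fin.last n)) (univ.map (centipedeCastSucc n).toEmbedding) := by
  ext x
  rcases x with i | i <;> simp [centipedeCastSucc, Fin.exists_castSucc_eq, em]

theorem indepPolyOn_centipede_erase_inr_last (n : ℕ) :
    indepPolyOn (centipede (n + 1)) (univ.erase (.inr (Fin.last n))) =
      (1 + X) * indepPoly (centipede n) := by
  have hfresh : (.inl (Fin.last n) : Fin (n + 1) ⊕ Fin (n + 1)) ∉
      univ.map (centipedeCastSucc n).toEmbedding := by
    simp [centipedeCastSucc]
  rw [univ_erase_inr_last, indepPolyOn_eq_one_add_X_mul_erase _ (mem_insert_self _ _),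
    erase_insert hfresh, indepPolyOn_map, indepPoly_eq_indepPolyOn_univ]
  simp [centipedeCastSucc, (Fin.castSucc_lt_last _).ne']

theorem indepPoly_centipede_succ (n : ℕ) :
    indepPoly (centipede (n + 1)) = (1 + X) * indepPoly (centipede n) +
      X * indepPolyOn (centipede (n + 1)) (univ.filter fun w =>
        w ≠ .inr (Fin.last n) ∧ ¬ (centipede (n + 1)).Adj (.inr (Fin.last n)) w) := by
  rw [indepPoly_eq_indepPolyOn_univ, indepPolyOn_eq_erase_add _ (mem_univ _),
    indepPolyOn_centipede_erase_inr_last]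

theorem indepPoly_centipede_zero : indepPoly (centipede 0) = 1 := by
  rw [indepPoly_eq_indepPolyOn_univ, univ_eq_empty, indepPolyOn_empty]

theorem indepPoly_centipede_one : indepPoly (centipede 1) = 1 + 2 * X := by
  have hnon : (univ.filter fun w : Fin 1 ⊕ Fin 1 =>
      w ≠ .inr (Fin.last 0) ∧ ¬ (centipede 1).Adj (.inr (Fin.last 0)) w) = ∅ := by
    ext w
    rcases w with i | i <;> simp [Fin.fin_one_eq_zero i]
  rw [indepPoly_centipede_succ, hnon, indepPolyOn_empty, indepPoly_centipede_zero]
  ring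

theorem indepPoly_centipede_add_two (n : ℕ) :
    indepPoly (centipede (n + 2)) =
      (1 + X) * (indepPoly (centipede (n + 1)) + X * indepPoly (centipede n)) := by
  have hnon : (univ.filter fun w : Fin (n + 2) ⊕ Fin (n + 2) =>
      w ≠ .inr (Fin.last (n + 1)) ∧ ¬ (centipede (n + 2)).Adj (.inr (Fin.last (n + 1))) w) =
      (univ.erase (.inr (Fin.last n))).map (centipedeCastSucc (n + 1)).toEmbedding := by
    ext w
    rcases w with i | i <;> simp [centipedeCastSucc] <;> rw [Fin.exists_castSucc_eq] <;>
      simp [Fin.ext_iff] <;> omega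
  rw [indepPoly_centipede_succ, hnon, indepPolyOn_map, indepPolyOn_centipede_erase_inr_last]
  ring

end Centipede

section CoeffRatio

variable {R : Type*} [CommRing R] [LinearOrder R]

def PosCoeffsOn (p : R[X]) (s t : ℕ) : Prop :=
  ∀ k, 0 ≤ p.coeff k ∧ (0 < p.coeff k ↔ s ≤ k ∧ k ≤ t)

-- `p ≼ q` in the sense of `p_{k+1} / p_k ≤ q_{k+1} / q_k`, with the denominators cleared.
def CoeffRatioLE (p q : R[X]) : Prop :=
  ∀ k, q.coeff k * p.coeff (k + 1) ≤ q.coeff (k + 1) * p.coeff k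

def LogConcave (p : R[X]) : Prop :=
  ∀ k, p.coeff k * p.coeff (k + 2) ≤ p.coeff (k + 1) ^ 2

namespace PosCoeffsOn

variable {p q : R[X]} {s t s' t' : ℕ}

theorem nonneg (hp : PosCoeffsOn p s t) (k : ℕ) : 0 ≤ p.coeff k := (hp k).1

theorem pos (hp : PosCoeffsOn p s t) {k : ℕ} (hs : s ≤ k) (ht : k ≤ t) : 0 < p.coeff k :=
  (hp k).2.mpr ⟨hs, ht⟩

theorem coeff_eq_zero_of_lt (hp : PosCoeffsOn p s t) {k : ℕ} (hk : k < s) : p.coeff k = 0 :=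
  ((hp k).1.eq_or_lt.resolve_right fun h => by have := ((hp k).2.mp h).1; omega).symm

theorem coeff_eq_zero_of_gt (hp : PosCoeffsOn p s t) {k : ℕ} (hk : t < k) : p.coeff k = 0 :=
  ((hp k).1.eq_or_lt.resolve_right fun h => by have := ((hp k).2.mp h).2; omega).symm

theorem X_mul (hp : PosCoeffsOn p s t) : PosCoeffsOn (X * p) (s + 1) (t + 1) := by
  rintro (_ | k)
  · simp
  · simpa [coeff_X_mul] using hp k

variable [IsStrictOrderedRing R]

theorem add (hp : PosCoeffsOn p s t) (hq : PosCoeffsOn q s' t') (hs : s ≤ s')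
    (hs' : s' ≤ t + 1) (ht : t ≤ t') : PosCoeffsOn (p + q) s t' := by
  intro k
  rw [coeff_add]
  refine ⟨add_nonneg (hp.nonneg k) (hq.nonneg k), fun h => ?_, fun ⟨hsk, hkt⟩ => ?_⟩
  · rcases (hp.nonneg k).eq_or_lt with hpk | hpk
    · rw [← hpk, zero_add] at h
      have := (hq k).2.mp h
      omega
    · have := (hp k).2.mp hpk
      omega
  · by_cases hk : k ≤ t
    · exact add_pos_of_pos_of_nonneg (hp.pos hsk hk) (hq.nonneg k)
    · exact add_pos_of_nonneg_of_pos (hp.nonneg k) (hq.pos (by omega) hkt)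

theorem one_add_X_mul (hp : PosCoeffsOn p s t) (hst : s ≤ t) :
    PosCoeffsOn ((1 + X) * p) s (t + 1) := by
  rw [one_add_mul]
  exact hp.add hp.X_mul (by omega) (by omega) (by omega)

end PosCoeffsOn

namespace CoeffRatioLE

variable {p q r : R[X]} {sp tp sq tq sr tr : ℕ}

theorem refl (p : R[X]) : CoeffRatioLE p p :=
  fun _ => (mul_comm _ _).le

theorem X_mul (h : CoeffRatioLE p q) : CoeffRatioLE (X * p) (X * q) := by
  rintro (_ | k)
  · simp
  · simpa [coeff_X_mul] using h k

theorem logConcave (h : CoeffRatioLE p (X * p)) : LogConcave p := by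
  intro k
  simpa [coeff_X_mul, sq] using h (k + 1)

variable [IsStrictOrderedRing R]

theorem add_left (hpr : CoeffRatioLE p r) (hqr : CoeffRatioLE q r) : CoeffRatioLE (p + q) r := by
  intro k
  simp only [coeff_add, mul_add]
  exact add_le_add (hpr k) (hqr k)

theorem add_right (hpq : CoeffRatioLE p q) (hpr : CoeffRatioLE p r) : CoeffRatioLE p (q + r) := by
  intro k
  simp only [coeff_add, add_mul]
  exact add_le_add (hpq k) (hpr k)

theorem trans (hpq : CoeffRatioLE p q) (hqr : CoeffRatioLE q r) (hp : PosCoeffsOn p sp tp)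
    (hq : PosCoeffsOn q sq tq) (hr : PosCoeffsOn r sr tr) (hs : sq ≤ sr) (ht : tp ≤ tq) :
    CoeffRatioLE p r := by
  intro k
  by_cases hk : sq ≤ k ∧ k + 1 ≤ tq
  · have hprod := mul_le_mul (hpq k) (hqr k) (mul_nonneg (hr.nonneg _) (hq.nonneg _))
      (mul_nonneg (hq.nonneg _) (hp.nonneg _))
    refine le_of_mul_le_mul_right ?_ (mul_pos (hq.pos hk.1 (by omega)) (hq.pos (by omega) hk.2))
    linarith
  · rcases not_and_or.mp hk with hk | hk
    · rw [hr.coeff_eq_zero_of_lt (by omega), zero_mul]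
      exact mul_nonneg (hr.nonneg _) (hp.nonneg _)
    · rw [hp.coeff_eq_zero_of_gt (by omega), mul_zero]
      exact mul_nonneg (hr.nonneg _) (hp.nonneg _)

theorem coeff_mul_coeff_add_two_le (h : CoeffRatioLE p q) (hp : PosCoeffsOn p sp tp)
    (hq : PosCoeffsOn q sq tq) (hs : sp ≤ sq) (ht : tp ≤ tq) (k : ℕ) :
    q.coeff k * p.coeff (k + 2) ≤ q.coeff (k + 2) * p.coeff k := by
  by_cases hk : sq ≤ k + 1 ∧ k + 1 ≤ tp
  · have hprod := mul_le_mul (h k) (h (k + 1)) (mul_nonneg (hq.nonneg _) (hp.nonneg _))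
      (mul_nonneg (hq.nonneg _) (hp.nonneg _))
    refine le_of_mul_le_mul_right ?_ (mul_pos (hp.pos (by omega) hk.2) (hq.pos hk.1 (by omega)))
    linarith
  · rcases not_and_or.mp hk with hk | hk
    · rw [hq.coeff_eq_zero_of_lt (by omega), zero_mul]
      exact mul_nonneg (hq.nonneg _) (hp.nonneg _)
    · rw [hp.coeff_eq_zero_of_gt (by omega), mul_zero]
      exact mul_nonneg (hq.nonneg _) (hp.nonneg _)

theorem one_add_X_mul (h : CoeffRatioLE p q) (hp : PosCoeffsOn p sp tp)
    (hq : PosCoeffsOn q sq tq) (hs : sp ≤ sq) (ht : tp ≤ tq) :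
    CoeffRatioLE ((1 + X) * p) ((1 + X) * q) := by
  rintro (_ | k)
  · simp only [one_add_mul, coeff_add, coeff_X_mul, coeff_X_mul_zero]
    linarith [h 0]
  · simp only [one_add_mul, coeff_add, coeff_X_mul]
    linarith [h k, h (k + 1), h.coeff_mul_coeff_add_two_le hp hq hs ht k]

end CoeffRatioLE

variable [IsStrictOrderedRing R]

theorem LogConcave.coeff_add_two_le {p : R[X]} {s t j : ℕ} (hlc : LogConcave p)
    (hp : PosCoeffsOn p s t) (hj : s ≤ j) (h : p.coeff (j + 1) ≤ p.coeff j) :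
    p.coeff (j + 2) ≤ p.coeff (j + 1) := by
  by_cases hjt : j ≤ t
  · have hsq : p.coeff (j + 1) ^ 2 ≤ p.coeff j * p.coeff (j + 1) := by
      rw [sq]
      exact mul_le_mul_of_nonneg_right h (hp.nonneg _)
    exact le_of_mul_le_mul_left ((hlc j).trans hsq) (hp.pos hj hjt)
  · rw [hp.coeff_eq_zero_of_gt (by omega)]
    exact hp.nonneg _

structure RatioInterlaced (b c : R[X]) : Prop where
  le : CoeffRatioLE c b
  le_X_mul : CoeffRatioLE b (X * c)
  one_add_X_mul_le : CoeffRatioLE ((1 + X) * c) b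

namespace RatioInterlaced

variable {b c : R[X]} {n : ℕ}

theorem coeffRatioLE_X_mul_right (h : RatioInterlaced b c) (hb : PosCoeffsOn b 0 (n + 1))
    (hc : PosCoeffsOn c 0 n) : CoeffRatioLE c (X * c) :=
  h.le.trans h.le_X_mul hc hb hc.X_mul (by omega) (by omega)

theorem coeffRatioLE_X_mul_left (h : RatioInterlaced b c) (hb : PosCoeffsOn b 0 (n + 1))
    (hc : PosCoeffsOn c 0 n) : CoeffRatioLE b (X * b) :=
  h.le_X_mul.trans h.le.X_mul hb hc.X_mul hb.X_mul le_rfl le_rfl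

theorem next (h : RatioInterlaced b c) (hb : PosCoeffsOn b 0 (n + 1)) (hc : PosCoeffsOn c 0 n) :
    RatioInterlaced ((1 + X) * (b + X * c)) b := by
  have hbXb := h.coeffRatioLE_X_mul_left hb hc
  have hbXXc : CoeffRatioLE b (X * (X * c)) :=
    h.le_X_mul.trans (h.coeffRatioLE_X_mul_right hb hc).X_mul hb hc.X_mul hc.X_mul.X_mul
      (by omega) le_rfl
  refine ⟨?_, ?_, ?_⟩
  · rw [show (1 + X) * (b + X * c) = b + X * b + X * c + X * (X * c) by ring]
    exact (((CoeffRatioLE.refl b).add_right hbXb).add_right h.le_X_mul).add_right hbXXc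
  · rw [show (1 + X) * (b + X * c) = b + X * b + X * ((1 + X) * c) by ring]
    exact (hbXb.add_left (CoeffRatioLE.refl _)).add_left h.one_add_X_mul_le.X_mul
  · rw [mul_add]
    exact (CoeffRatioLE.refl _).add_right
      (h.le_X_mul.one_add_X_mul hb hc.X_mul (by omega) le_rfl)

end RatioInterlaced

end CoeffRatio

theorem LogConcave.unimodal {p : ℤ[X]} {s t : ℕ} (hlc : LogConcave p) (hp : PosCoeffsOn p s t) :
    Unimodal p := by
  by_cases hst : t < s
  · have hzero : ∀ k, p.coeff k = 0 := fun k =>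
      (lt_or_ge k s).elim hp.coeff_eq_zero_of_lt fun hk => hp.coeff_eq_zero_of_gt (by omega)
    exact ⟨0, fun i j _ _ => by simp [hzero], fun i j _ _ => by simp [hzero]⟩
  have hex : ∃ j, p.coeff (j + 1) < p.coeff j :=
    ⟨t, by rw [hp.coeff_eq_zero_of_gt (Nat.lt_succ_self t)]; exact hp.pos (by omega) le_rfl⟩
  set K := Nat.find hex
  have hsK : s ≤ K := by
    by_contra hK
    have := Nat.find_spec hex
    rw [hp.coeff_eq_zero_of_lt (by omega : K < s)] at this
    exact (hp.nonneg _).not_gt this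
  have hdesc : ∀ j, K ≤ j → p.coeff (j + 1) ≤ p.coeff j := by
    intro j hj
    induction j, hj using Nat.le_induction with
    | base => exact (Nat.find_spec hex).le
    | succ j hj ih => exact hlc.coeff_add_two_le hp (hsK.trans hj) ih
  refine ⟨K, fun i j hij hjK => ?_, fun i j hKi hij => ?_⟩
  · induction j, hij using Nat.le_induction with
    | base => exact le_rfl
    | succ j hij ih => exact (ih (by omega)).trans (not_lt.mp (Nat.find_min hex (by omega)))
  · induction j, hij using Nat.le_induction with
    | base => exact le_rfl
    | succ j hij ih => exact (hdesc j (hKi.trans hij)).trans ih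

section CentipedeUnimodal

theorem posCoeffsOn_indepPoly_centipede : ∀ n, PosCoeffsOn (indepPoly (centipede n)) 0 n
  | 0 => by
    rw [indepPoly_centipede_zero]
    rintro (_ | k) <;> simp [coeff_one]
  | 1 => by
    rw [indepPoly_centipede_one]
    rintro (_ | _ | k) <;> simp [coeff_X, coeff_one]
  | n + 2 => by
    rw [indepPoly_centipede_add_two]
    exact ((posCoeffsOn_indepPoly_centipede (n + 1)).add (posCoeffsOn_indepPoly_centipede n).X_mul
      (by omega) (by omega) le_rfl).one_add_X_mul (by omega)

theorem ratioInterlaced_indepPoly_centipede :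
    ∀ n, RatioInterlaced (indepPoly (centipede (n + 1))) (indepPoly (centipede n))
  | 0 => by
    rw [indepPoly_centipede_one, indepPoly_centipede_zero]
    constructor <;> rintro (_ | _ | k) <;> simp [coeff_X, coeff_one]
  | n + 1 => by
    rw [indepPoly_centipede_add_two]
    exact (ratioInterlaced_indepPoly_centipede n).next
      (posCoeffsOn_indepPoly_centipede (n + 1)) (posCoeffsOn_indepPoly_centipede n)

theorem logConcave_indepPoly_centipede (n : ℕ) : LogConcave (indepPoly (centipede n)) :=
  ((ratioInterlaced_indepPoly_centipede n).coeffRatioLE_X_mul_right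
    (posCoeffsOn_indepPoly_centipede (n + 1)) (posCoeffsOn_indepPoly_centipede n)).logConcave

end CentipedeUnimodal

/-- `I(W_n;x)` is unimodal for all `n ≥ 1`, `I(W_0;x) = 1`,
`I(W_1;x) = 1 + 2x`, and for `n ≥ 2`,
`I(W_n;x) = (1+x)·(I(W_{n−1};x) + x·I(W_{n−2};x))`. -/
theorem stmt13 :
    (∀ n : ℕ, 1 ≤ n → Unimodal (indepPoly (centipede n))) ∧
    indepPoly (centipede 0) = 1 ∧
    indepPoly (centipede 1) = 1 + 2 * Polynomial.X ∧
    (∀ n : ℕ, 2 ≤ n → indepPoly (centipede n) =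
      (1 + Polynomial.X) *
        (indepPoly (centipede (n - 1)) + Polynomial.X * indepPoly (centipede (n - 2)))) := by
  refine ⟨fun n _ => (logConcave_indepPoly_centipede n).unimodal
    (posCoeffsOn_indepPoly_centipede n), indepPoly_centipede_zero, indepPoly_centipede_one,
    fun n hn => ?_⟩
  obtain ⟨m, rfl⟩ := Nat.exists_eq_add_of_le' hn
  exact indepPoly_centipede_add_two m
end
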